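/- arXiv:2102.08995 — 5 statements merged into one kernel-verified Lean document; each statement's English description precedes it below -/
import Mathlib

section
/- Let I ⊆ A ⊆ [n]. Then the number of ordered pairs (a, b) ∈ I² with a < b such that {a, b} is not contained in any 3-AP of A is at most |I|²/4 + |I|·(n − |A|)/2. -/
/-!
Split the pairs `a < b` of `I` that lie in no 3-AP of `A` by the parity of `a + b`.
If `a + b` is odd, `a` and `b` have different parities, so there are at most
`#evens · #odds ≤ |I|² / 4` such pairs. If `a + b = 2m` is even, the midpoint `m` lies in
`[n] \ A`, since otherwise `(a, m, b)` would be a 3-AP of `A`; and for a fixed `m` the pairs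
with midpoint `m` are pairwise disjoint subsets of `I`, so there are at most `|I| / 2` of them.
-/

/-- The pair `{a, b}` is contained in some 3-AP of `A`: there is a 3-AP
`(u, u+d, u+2d)` with `d ≥ 1` and all three elements in `A` whose underlying
set contains both `a` and `b`. -/
def PairInAP (A : Finset ℕ) (a b : ℕ) : Prop :=
  ∃ u d : ℕ, 0 < d ∧ u ∈ A ∧ u + d ∈ A ∧ u + 2 * d ∈ A ∧
    a ∈ ({u, u + d, u + 2 * d} : Set ℕ) ∧ b ∈ ({u, u + d, u + 2 * d} : Set ℕ)

open Finset

theorem pairInAP_of_midpoint_mem {A : Finset ℕ} {a b m : ℕ} (ha : a ∈ A) (hb : b ∈ A)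
    (hm : m ∈ A) (hab : a < b) (hsum : a + b = 2 * m) : PairInAP A a b := by
  refine ⟨a, m - a, by omega, ha, ?_, ?_, by simp, ?_⟩
  · rwa [show a + (m - a) = m by omega]
  · rwa [show a + 2 * (m - a) = b by omega]
  · simp only [Set.mem_insert_iff, Set.mem_singleton_iff]
    omega

section IncreasingPairs

variable {s : Finset ℕ} {P : Finset (ℕ × ℕ)}

theorem card_odd_sum_pairs_le (hP : ∀ p ∈ P, p.1 ∈ s ∧ p.2 ∈ s ∧ p.1 < p.2) :
    #{p ∈ P | Odd (p.1 + p.2)} ≤ #{x ∈ s | Even x} * #{x ∈ s | Odd x} := by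
  rw [← card_product]
  refine card_le_card_of_injOn (fun p => if Even p.1 then p else p.swap) ?_ ?_
  · intro p hp
    simp only [coe_filter, Set.mem_ofPred_eq] at hp
    obtain ⟨h1, h2, -⟩ := hP p hp.1
    rcases Nat.even_or_odd p.1 with he | ho
    · simp [he, h1, h2, (Nat.odd_add'.1 hp.2).2 he]
    · simp [Nat.not_even_iff_odd.2 ho, h1, h2, ho, (Nat.odd_add.1 hp.2).1 ho]
  · intro p hp q hq hpq
    have hp' := (hP p (mem_filter.1 hp).1).2.2
    have hq' := (hP q (mem_filter.1 hq).1).2.2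
    simp only at hpq
    split_ifs at hpq <;> simp only [Prod.ext_iff, Prod.fst_swap, Prod.snd_swap] at hpq ⊢ <;> omega

theorem two_mul_card_pairs_with_sum_le (hP : ∀ p ∈ P, p.1 ∈ s ∧ p.2 ∈ s ∧ p.1 < p.2)
    (c : ℕ) : 2 * #{p ∈ P | p.1 + p.2 = c} ≤ #s := by
  set F := {p ∈ P | p.1 + p.2 = c}
  have hF : ∀ p ∈ F, p.1 ∈ s ∧ p.2 ∈ s ∧ p.1 < p.2 ∧ p.1 + p.2 = c := fun p hp =>
    let ⟨hpP, hc⟩ := mem_filter.1 hp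
    ⟨(hP p hpP).1, (hP p hpP).2.1, (hP p hpP).2.2, hc⟩
  have hfst : #(F.image Prod.fst) = #F := card_image_of_injOn fun p hp q hq h => by
    have := hF p hp; have := hF q hq; exact Prod.ext h (by omega)
  have hsnd : #(F.image Prod.snd) = #F := card_image_of_injOn fun p hp q hq h => by
    have := hF p hp; have := hF q hq; exact Prod.ext (by omega) h
  have hdisj : Disjoint (F.image Prod.fst) (F.image Prod.snd) := by
    simp only [disjoint_left, mem_image]
    rintro _ ⟨p, hp, rfl⟩ ⟨q, hq, hqp⟩
    have := hF p hp; have := hF q hq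
    omega
  have hsub : F.image Prod.fst ∪ F.image Prod.snd ⊆ s := by
    simp only [union_subset_iff, image_subset_iff]
    exact ⟨fun p hp => (hF p hp).1, fun p hp => (hF p hp).2.1⟩
  calc 2 * #F = #(F.image Prod.fst ∪ F.image Prod.snd) := by
        rw [card_union_of_disjoint hdisj, hfst, hsnd]; ring
    _ ≤ #s := card_le_card hsub

theorem two_mul_card_even_sum_pairs_le (hP : ∀ p ∈ P, p.1 ∈ s ∧ p.2 ∈ s ∧ p.1 < p.2)
    {T : Finset ℕ} (hT : ∀ p ∈ P, Even (p.1 + p.2) → (p.1 + p.2) / 2 ∈ T) :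
    2 * #{p ∈ P | Even (p.1 + p.2)} ≤ #T * #s := by
  have hmaps : Set.MapsTo (fun p : ℕ × ℕ => (p.1 + p.2) / 2)
      (({p ∈ P | Even (p.1 + p.2)} : Finset _) : Set (ℕ × ℕ)) T := fun p hp => by
    rw [coe_filter] at hp; exact hT p hp.1 hp.2
  rw [card_eq_sum_card_fiberwise hmaps, mul_sum, ← smul_eq_mul, ← sum_const]
  refine sum_le_sum fun m _ => le_trans ?_ (two_mul_card_pairs_with_sum_le hP (2 * m))
  gcongr
  intro p
  simp only [mem_filter, and_imp]
  intro hpP he hm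
  exact ⟨hpP, by rw [← hm]; exact (Nat.two_mul_div_two_of_even he).symm⟩

end IncreasingPairs

theorem stmt_9 (n : ℕ) (I A : Finset ℕ) (hIA : I ⊆ A) (hA : A ⊆ Finset.Icc 1 n) :
    (Nat.card {p : ℕ × ℕ //
        p.1 ∈ I ∧ p.2 ∈ I ∧ p.1 < p.2 ∧ ¬ PairInAP A p.1 p.2} : ℝ) ≤
      (I.card : ℝ) ^ 2 / 4 + (I.card : ℝ) * ((n : ℝ) - A.card) / 2 := by
  classical
  set S := {p ∈ I ×ˢ I | p.1 < p.2 ∧ ¬ PairInAP A p.1 p.2}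
  have hcard : Nat.card {p : ℕ × ℕ // p.1 ∈ I ∧ p.2 ∈ I ∧ p.1 < p.2 ∧ ¬ PairInAP A p.1 p.2}
      = #S := by
    rw [← Nat.card_eq_finsetCard]
    exact Nat.card_congr (Equiv.subtypeEquivRight fun p => by simp [S, and_assoc])
  have hS : ∀ p ∈ S, p.1 ∈ I ∧ p.2 ∈ I ∧ p.1 < p.2 := fun p hp => by
    simp only [S, mem_filter, mem_product] at hp; exact ⟨hp.1.1, hp.1.2, hp.2.1⟩
  have hmid : ∀ p ∈ S, Even (p.1 + p.2) → (p.1 + p.2) / 2 ∈ Icc 1 n \ A := by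
    intro p hp he
    simp only [S, mem_filter, mem_product] at hp
    obtain ⟨⟨h1, h2⟩, hlt, hnot⟩ := hp
    have ha := mem_Icc.1 (hA (hIA h1))
    have hb := mem_Icc.1 (hA (hIA h2))
    refine mem_sdiff.2 ⟨mem_Icc.2 ⟨by omega, by omega⟩, fun hm => hnot ?_⟩
    exact pairInAP_of_midpoint_mem (hIA h1) (hIA h2) hm hlt (Nat.two_mul_div_two_of_even he).symm
  have hodd := card_odd_sum_pairs_le hS
  have heven := two_mul_card_even_sum_pairs_le hS hmid
  have hsplit := card_filter_add_card_filter_not (s := S) (fun p => Even (p.1 + p.2))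
  have hparity := card_filter_add_card_filter_not (s := I) (fun x => Even x)
  have hAn : #A ≤ n := by simpa using card_le_card hA
  rw [card_sdiff_of_subset hA, Nat.card_Icc, Nat.add_sub_cancel] at heven
  simp only [Nat.not_even_iff_odd] at hsplit hparity
  rw [hcard, ← hsplit]
  push_cast
  have hamgm := four_mul_le_sq_add (#{x ∈ I | Even x} : ℝ) #{x ∈ I | Odd x}
  rify [hAn] at hodd heven hparity
  nlinarith
end

section
/- There exists n₀ ∈ ℕ such that for all n ≥ n₀ the following holds. Let I ⊆ A ⊆ [n] with |I| ≥ (73/74)·n, and let I₁, I₂ be a bipartition of I (I = I₁ ∪ I₂, I₁ ∩ I₂ = ∅) with |I₁| ≤ |I₂|. Then there are at least |I₁|·|I₂|/9 − 3·|I₁|·(n − |A|) pairs (a, b) with a ∈ I₁ and b ∈ I₂ such that {a, b} is contained in some 3-AP of A. -/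
open Finset
open scoped Classical

lemma pairInAP_of_add_eq_two_mul {A : Finset ℕ} {x y z a b : ℕ} (hxy : x ≠ y)
    (hxyz : x + z = 2 * y) (hx : x ∈ A) (hy : y ∈ A) (hz : z ∈ A)
    (ha : a = x ∨ a = y ∨ a = z) (hb : b = x ∨ b = y ∨ b = z) : PairInAP A a b := by
  rcases hxy.lt_or_gt with hlt | hgt
  · refine ⟨x, y - x, by omega, hx, by rwa [show x + (y - x) = y by omega],
      by rwa [show x + 2 * (y - x) = z by omega], ?_, ?_⟩ <;>
    · simp only [Set.mem_insert_iff, Set.mem_singleton_iff]; omega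
  · refine ⟨z, y - z, by omega, hz, by rwa [show z + (y - z) = y by omega],
      by rwa [show z + 2 * (y - z) = x by omega], ?_, ?_⟩ <;>
    · simp only [Set.mem_insert_iff, Set.mem_singleton_iff]; omega

lemma not_pairInAP_cases {A : Finset ℕ} {n a b : ℕ} (hA : A ⊆ Icc 1 n) (ha : a ∈ A) (hb : b ∈ A)
    (hab : a ≠ b) (h : ¬ PairInAP A a b) :
    (∃ c ∈ Icc 1 n \ A, a + b = 2 * c ∨ a + c = 2 * b) ∨
      (a % 2 ≠ b % 2 ∧ (n + a < 2 * b ∨ 2 * b ≤ a)) := by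
  have ha' := mem_Icc.mp (hA ha)
  have hb' := mem_Icc.mp (hA hb)
  by_cases hpar : a % 2 = b % 2
  · refine .inl ⟨(a + b) / 2, mem_sdiff.mpr ⟨mem_Icc.mpr (by omega), fun hc => h ?_⟩,
      .inl (by omega)⟩
    exact pairInAP_of_add_eq_two_mul (z := b) (by omega) (by omega) ha hc hb
      (.inl rfl) (.inr (.inr rfl))
  by_cases hout : n + a < 2 * b ∨ 2 * b ≤ a
  · exact .inr ⟨hpar, hout⟩
  refine .inl ⟨2 * b - a, mem_sdiff.mpr ⟨mem_Icc.mpr (by omega), fun hc => h ?_⟩, .inr (by omega)⟩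
  exact pairInAP_of_add_eq_two_mul (z := 2 * b - a) hab (by omega) ha hb hc
    (.inl rfl) (.inr (.inl rfl))

lemma card_filter_mod_two_Ioc_le (c d r : ℕ) :
    #((Ioc c d).filter (· % 2 = r)) ≤ (d - c + 1) / 2 := by
  refine (card_le_card_of_injOn (fun b => (b - c - 1) / 2) (fun b hb => ?_)
    (fun b₁ h₁ b₂ h₂ (hEq : (b₁ - c - 1) / 2 = (b₂ - c - 1) / 2) => ?_)).trans_eq (card_range _)
  · rw [mem_coe, mem_filter, mem_Ioc] at hb
    simp only [coe_range, Set.mem_Iio]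
    omega
  · rw [mem_coe, mem_filter, mem_Ioc] at h₁ h₂
    omega

lemma card_filter_not_pairInAP_le {A : Finset ℕ} {n a : ℕ} (hA : A ⊆ Icc 1 n) (ha : a ∈ A) :
    #((A.erase a).filter (¬ PairInAP A a ·)) ≤ n / 4 + 2 + 2 * (n - #A) := by
  have ha' := mem_Icc.mp (hA ha)
  set high := (Ioc ((n + a) / 2) n).filter (· % 2 = (a + 1) % 2)
  set low := (Ioc 0 (a / 2)).filter (· % 2 = (a + 1) % 2)
  set missing := (Icc 1 n \ A).biUnion fun c => ({2 * c - a, (a + c) / 2} : Finset ℕ)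
  have hsub : (A.erase a).filter (¬ PairInAP A a ·) ⊆ missing ∪ (high ∪ low) := by
    intro b hb
    obtain ⟨⟨hba, hbA⟩, hbad⟩ := by simpa only [mem_filter, mem_erase] using hb
    have hb' := mem_Icc.mp (hA hbA)
    rcases not_pairInAP_cases hA ha hbA (Ne.symm hba) hbad with ⟨c, hc, hrel⟩ | ⟨hpar, hout⟩
    · refine mem_union_left _ (mem_biUnion.mpr ⟨c, hc, ?_⟩)
      simp only [mem_insert, mem_singleton]
      omega
    · simp only [high, low, mem_union, mem_filter, mem_Ioc]
      omega
  have hmissing : #missing ≤ (n - #A) * 2 := by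
    refine (card_biUnion_le_card_mul _ _ 2 fun _ _ => card_le_two).trans_eq ?_
    rw [card_sdiff_of_subset hA, Nat.card_Icc, Nat.add_sub_cancel]
  have hhigh : #high ≤ (n - (n + a) / 2 + 1) / 2 := card_filter_mod_two_Ioc_le _ _ _
  have hlow : #low ≤ (a / 2 - 0 + 1) / 2 := card_filter_mod_two_Ioc_le _ _ _
  calc #((A.erase a).filter (¬ PairInAP A a ·))
      ≤ #missing + #(high ∪ low) := (card_le_card hsub).trans (card_union_le _ _)
    _ ≤ #missing + (#high + #low) := by grw [card_union_le]
    _ ≤ n / 4 + 2 + 2 * (n - #A) := by omega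

lemma card_filter_not_pairInAP_product_le {A I₁ I₂ : Finset ℕ} {n : ℕ} (hA : A ⊆ Icc 1 n)
    (h₁ : I₁ ⊆ A) (h₂ : I₂ ⊆ A) (hdisj : Disjoint I₁ I₂) :
    #((I₁ ×ˢ I₂).filter fun p => ¬ PairInAP A p.1 p.2) ≤
      #I₁ * (n / 4 + 2 + 2 * (n - #A)) := by
  have hsub : (I₁ ×ˢ I₂).filter (fun p => ¬ PairInAP A p.1 p.2) ⊆
      I₁.biUnion fun a => ((A.erase a).filter (¬ PairInAP A a ·)).image (Prod.mk a) := by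
    rintro ⟨a, b⟩ hp
    obtain ⟨⟨ha, hb⟩, hbad⟩ := by simpa only [mem_filter, mem_product] using hp
    have hba : b ≠ a := fun h => disjoint_left.mp hdisj ha (h ▸ hb)
    simp only [mem_biUnion, mem_image, mem_filter, mem_erase, Prod.mk.injEq]
    exact ⟨a, ha, b, ⟨⟨hba, h₂ hb⟩, hbad⟩, rfl, rfl⟩
  refine (card_le_card hsub).trans (card_biUnion_le_card_mul _ _ _ fun a ha => ?_)
  exact card_image_le.trans (card_filter_not_pairInAP_le hA (h₁ ha))

theorem stmt_10 :
    ∃ n₀ : ℕ, ∀ n : ℕ, n₀ ≤ n →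
      ∀ I A I₁ I₂ : Finset ℕ, I ⊆ A → A ⊆ Finset.Icc 1 n →
        (73 / 74 : ℝ) * n ≤ (I.card : ℝ) →
        I₁ ∪ I₂ = I → Disjoint I₁ I₂ → I₁.card ≤ I₂.card →
        (I₁.card : ℝ) * I₂.card / 9 - 3 * (I₁.card : ℝ) * ((n : ℝ) - A.card) ≤
          (Nat.card {p : ℕ × ℕ //
            p.1 ∈ I₁ ∧ p.2 ∈ I₂ ∧ PairInAP A p.1 p.2} : ℝ) := by
  refine ⟨12, fun n hn I A I₁ I₂ hIA hA hI hunion hdisj hle => ?_⟩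
  subst hunion
  set good := (I₁ ×ˢ I₂).filter fun p => PairInAP A p.1 p.2
  have hgood : Nat.card {p : ℕ × ℕ // p.1 ∈ I₁ ∧ p.2 ∈ I₂ ∧ PairInAP A p.1 p.2} = #good := by
    rw [← Nat.card_eq_finsetCard]
    exact Nat.card_congr (Equiv.subtypeEquivRight fun p => by simp [good, and_assoc])
  have hcount : #I₁ * #I₂ ≤ #good + #I₁ * (n / 4 + 2 + 2 * (n - #A)) := by
    rw [← card_product, ← card_filter_add_card_filter_not (fun p => PairInAP A p.1 p.2)]
    exact Nat.add_le_add_left (card_filter_not_pairInAP_product_le hA (union_subset_left hIA)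
      (union_subset_right hIA) hdisj) _
  have hAn : #A ≤ n := by simpa using card_le_card hA
  have hI₂ : (n : ℝ) / 4 + 2 ≤ 8 / 9 * #I₂ := by
    have : (#I₁ : ℝ) ≤ #I₂ := by exact_mod_cast hle
    have : (12 : ℝ) ≤ n := by exact_mod_cast hn
    rw [card_union_of_disjoint hdisj, Nat.cast_add] at hI
    linarith
  have hcount' : (#I₁ : ℝ) * #I₂ ≤ #good + #I₁ * ((n / 4 : ℕ) + 2 + 2 * (n - #A)) := by
    have := (Nat.cast_le (α := ℝ)).mpr hcount
    push_cast [Nat.cast_sub hAn] at this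
    exact this
  have hquarter : ((n / 4 : ℕ) : ℝ) ≤ n / 4 := Nat.cast_div_le
  have hI₁_nonneg : (0 : ℝ) ≤ #I₁ := Nat.cast_nonneg _
  have hmissing_nonneg : (0 : ℝ) ≤ n - #A := sub_nonneg.mpr (by exact_mod_cast hAn)
  rw [hgood]
  nlinarith [mul_le_mul_of_nonneg_left hI₂ hI₁_nonneg,
    mul_le_mul_of_nonneg_left hquarter hI₁_nonneg]
end

section
/- For every integer r ≥ 3 there exists n₀ ∈ ℕ such that for all n ≥ n₀ the following holds. Let δ = 1/(34·log₂ n), let ξ be a real number with 0 < ξ < (log₂ r − 1)·n^{−1/3}·log₂ n + δ, and let A ⊆ [n] with |A| = (1 − ξ)n. For fixed distinct colors i, j ∈ [r], let 𝒫_{i,j} be the set of good r-templates P of A such that |{x ∈ [n] : P(x) = {i, j}}| ≥ (1 − 2δ)n. Then the number of rainbow 3-AP-free r-colorings of A that are subtemplates of some P ∈ 𝒫_{i,j} is at most 2^{|A|}·(1 + 2^{−n/240}). -/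
/-- A coloring `c : A → Fin r` is rainbow 3-AP-free if no 3-AP of `A`
receives three pairwise distinct colors. -/
def RainbowAPFree {r : ℕ} (A : Finset ℕ) (c : A → Fin r) : Prop :=
  ∀ a d : ℕ, 0 < d → ∀ (h1 : a ∈ A) (h2 : a + d ∈ A) (h3 : a + 2 * d ∈ A),
    c ⟨a, h1⟩ = c ⟨a + d, h2⟩ ∨ c ⟨a + d, h2⟩ = c ⟨a + 2 * d, h3⟩ ∨
      c ⟨a, h1⟩ = c ⟨a + 2 * d, h3⟩

/-- `fAP n` is the number of 3-APs in `[n] = {1, …, n}`. -/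
def fAP (n : ℕ) : ℕ :=
  (((Finset.Icc 1 n) ×ˢ (Finset.Icc 1 n)).filter
    fun p => p.1 + p.2 ∈ Finset.Icc 1 n ∧ p.1 + 2 * p.2 ∈ Finset.Icc 1 n).card

/-- `Rtemp n P` is the number of pairs consisting of a 3-AP `(a, a+d, a+2d)` of
`[n]` together with pairwise distinct colors `i ∈ P a`, `j ∈ P (a+d)`,
`ℓ ∈ P (a+2d)`. -/
def Rtemp {r : ℕ} (n : ℕ) (P : ℕ → Finset (Fin r)) : ℕ :=
  ((((Finset.Icc 1 n) ×ˢ (Finset.Icc 1 n)) ×ˢ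
      ((Finset.univ : Finset (Fin r)) ×ˢ Finset.univ ×ˢ Finset.univ)).filter
    fun t => t.1.1 + 2 * t.1.2 ≤ n ∧ t.2.1 ∈ P t.1.1 ∧
      t.2.2.1 ∈ P (t.1.1 + t.1.2) ∧ t.2.2.2 ∈ P (t.1.1 + 2 * t.1.2) ∧
      t.2.1 ≠ t.2.2.1 ∧ t.2.2.1 ≠ t.2.2.2 ∧ t.2.1 ≠ t.2.2.2).card

/-- `P` is a good `r`-template of `A` (inside `[n]`) if every `x ∈ A` has a
nonempty palette and `R(P) ≤ n^{-1/3} · f(n)`. -/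
def GoodTemplate {r : ℕ} (n : ℕ) (A : Finset ℕ) (P : ℕ → Finset (Fin r)) : Prop :=
  (∀ x ∈ A, (P x).Nonempty) ∧
    (Rtemp n P : ℝ) ≤ (n : ℝ) ^ (-(1/3 : ℝ)) * fAP n

/-- `gPA A P` is the number of rainbow 3-AP-free `r`-colorings of `A` that are
subtemplates of `P`, i.e. with `c x ∈ P x` for every `x ∈ A`. -/
noncomputable def gPA {r : ℕ} (A : Finset ℕ) (P : ℕ → Finset (Fin r)) : ℕ :=
  Nat.card {c : A → Fin r // RainbowAPFree A c ∧
    ∀ (x : ℕ) (hx : x ∈ A), c ⟨x, hx⟩ ∈ P x}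

/-!
A template `P` with at least `(1 - 2δ)n` palettes equal to `{i, j}` has few positions whose
palette contains a third color: each such `x` is an end point of about `n/8` 3-APs whose other
two terms have palette `{i, j}`, and each of them contributes two rainbow colorings to `R(P)`.
As `R(P) ≤ n^{5/3}`, there are at most `K = ⌈10 n^{2/3}⌉` such positions, so a coloring counted
in the theorem uses colors outside `{i, j}` on a set `B ⊆ A` with `|B| ≤ K`.

There are at most `2^{|A|}` colorings with `B = ∅`. Otherwise fix `x₀ ∈ B`. For all but
`2(n - |A| + |B|)` of the `n/8` differences `d`, both other terms of the 3-AP at `x₀` lie in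
`A \ B`, and since `x₀` has a third color, rainbow-freeness forces them to share a color. This
saves a factor `2^{n/8 - 2(n - |A| + |B|)}`, which beats the factor `r^{|B|}` for the colors
on `B` and the at most `(K + 1) n^K` choices of `B`.
-/

open Finset

theorem Finset.card_le_card_filter_add_two_mul_card_sdiff {ι α : Type*} [DecidableEq α]
    {D : Finset ι} {U G : Finset α} {f g : ι → α} (hf : Set.InjOn f D) (hg : Set.InjOn g D)
    (hfU : ∀ d ∈ D, f d ∈ U) (hgU : ∀ d ∈ D, g d ∈ U) :
    #D ≤ #{d ∈ D | f d ∈ G ∧ g d ∈ G} + 2 * #(U \ G) := by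
  have hf' : #{d ∈ D | f d ∉ G} ≤ #(U \ G) :=
    card_le_card_of_injOn f (fun d hd => by simp_all) (hf.mono (filter_subset _ _))
  have hg' : #{d ∈ D | g d ∉ G} ≤ #(U \ G) :=
    card_le_card_of_injOn g (fun d hd => by simp_all) (hg.mono (filter_subset _ _))
  have hbad : #{d ∈ D | ¬(f d ∈ G ∧ g d ∈ G)} ≤ #{d ∈ D | f d ∉ G} + #{d ∈ D | g d ∉ G} := by
    classical
    simp only [not_and_or, filter_or]
    exact card_union_le _ _
  have := card_filter_add_card_filter_not (s := D) (fun d => f d ∈ G ∧ g d ∈ G)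
  omega

theorem Finset.card_le_prod_of_eqOn {α β : Type*} [Fintype α] [DecidableEq α]
    (F : Finset (α → β)) (p : α → Prop) [DecidablePred p] (pal : α → Finset β)
    (hpal : ∀ f ∈ F, ∀ x, ¬p x → f x ∈ pal x)
    (hdet : ∀ f ∈ F, ∀ g ∈ F, (∀ x, ¬p x → f x = g x) → f = g) :
    #F ≤ ∏ x, if p x then 1 else #(pal x) := by
  calc #F ≤ #(Fintype.piFinset fun x : {x // ¬p x} => pal x) :=
        card_le_card_of_injOn (fun f x => f x)
          (fun f hf => Fintype.mem_piFinset.2 fun x => hpal f hf x x.2)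
          (fun f hf g hg h => hdet f hf g hg fun x hx => congrFun h ⟨x, hx⟩)
    _ = ∏ x, if p x then 1 else #(pal x) := by
        rw [Fintype.card_piFinset,
          ← prod_subtype (p := fun x => ¬p x) {x | ¬p x} (by simp) fun x => #(pal x), prod_filter]
        simp only [ite_not]

theorem Finset.card_filter_powerset_card_le {α : Type*} (s : Finset α) (K : ℕ) {m : ℕ}
    (hm : 0 < m) (hs : #s ≤ m) : #{B ∈ s.powerset | #B ≤ K} ≤ (K + 1) * m ^ K := by
  classical
  calc #{B ∈ s.powerset | #B ≤ K}
      ≤ #((range (K + 1)).biUnion fun k => s.powersetCard k) := by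
        refine card_le_card fun B hB => ?_
        simp only [mem_filter, mem_powerset] at hB
        exact mem_biUnion.2 ⟨#B, mem_range.2 (by omega), mem_powersetCard.2 ⟨hB.1, rfl⟩⟩
    _ ≤ ∑ k ∈ range (K + 1), #(s.powersetCard k) := card_biUnion_le
    _ ≤ ∑ _k ∈ range (K + 1), m ^ K := by
        refine sum_le_sum fun k hk => ?_
        rw [card_powersetCard]
        calc (#s).choose k ≤ #s ^ k := Nat.choose_le_pow _ _
          _ ≤ m ^ k := Nat.pow_le_pow_left hs k
          _ ≤ m ^ K := Nat.pow_le_pow_right hm (by simpa [Nat.lt_succ_iff] using hk)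
    _ = (K + 1) * m ^ K := by rw [sum_const, card_range, smul_eq_mul]

lemma Real.logb_two_le_two_mul {x : ℝ} (hx : 0 ≤ x) : Real.logb 2 x ≤ 2 * x := by
  rcases hx.eq_or_lt with rfl | hx
  · simp
  have hlog := Real.log_le_sub_one_of_pos hx
  have := Real.log_two_gt_d9
  rw [← Real.log_div_log, div_le_iff₀ (by positivity)]
  nlinarith

lemma Real.logb_two_le_nine_mul_rpow {x : ℝ} (hx : 0 ≤ x) :
    Real.logb 2 x ≤ 9 * x ^ (1 / 6 : ℝ) := by
  have h := Real.log_le_rpow_div hx (by norm_num : (0 : ℝ) < 1 / 6)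
  have := Real.log_two_gt_d9
  rw [← Real.log_div_log, div_le_iff₀ (by positivity)]
  nlinarith [Real.rpow_nonneg hx (1 / 6 : ℝ)]

lemma RainbowAPFree.eq_of_ne {r : ℕ} {A : Finset ℕ} {c : A → Fin r} (hc : RainbowAPFree A c)
    {x y z : ℕ} (hx : x ∈ A) (hy : y ∈ A) (hz : z ∈ A) (hxz : x ≠ z) (hmid : x + z = 2 * y)
    (hxy : c ⟨x, hx⟩ ≠ c ⟨y, hy⟩) (hxz' : c ⟨x, hx⟩ ≠ c ⟨z, hz⟩) : c ⟨y, hy⟩ = c ⟨z, hz⟩ := by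
  rcases lt_or_gt_of_ne hxz with h | h
  · obtain ⟨d, rfl⟩ : ∃ d, y = x + d := ⟨y - x, by omega⟩
    obtain rfl : z = x + 2 * d := by omega
    have := hc x d (by omega) hx hy hz
    tauto
  · obtain ⟨d, rfl⟩ : ∃ d, y = z + d := ⟨y - z, by omega⟩
    obtain rfl : x = z + 2 * d := by omega
    have := hc z d (by omega) hz hy hx
    tauto

def apDiffs (n : ℕ) : Finset ℕ := Ioc (n / 8) (2 * (n / 8))

/-- For `d ∈ apDiffs n`, `x, partner₁ n x d, partner₂ n x d` is the 3-AP of difference `d` that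
starts at `x` and runs to the right if `x ≤ n / 2`, to the left otherwise, so that it stays in
`[n]`. -/
def partner₁ (n x d : ℕ) : ℕ := if x ≤ n / 2 then x + d else x - d

def partner₂ (n x d : ℕ) : ℕ := if x ≤ n / 2 then x + 2 * d else x - 2 * d

def goodDiffs (n x : ℕ) (G : Finset ℕ) : Finset ℕ :=
  {d ∈ apDiffs n | partner₁ n x d ∈ G ∧ partner₂ n x d ∈ G}

section Partners

variable {n x d d' : ℕ}

lemma card_apDiffs (n : ℕ) : #(apDiffs n) = n / 8 := by
  simp only [apDiffs, Nat.card_Ioc]; omega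

lemma partner₁_mem_Icc (hx : x ∈ Icc 1 n) (hd : d ∈ apDiffs n) : partner₁ n x d ∈ Icc 1 n := by
  simp only [apDiffs, mem_Ioc, mem_Icc, partner₁] at *; split_ifs <;> omega

lemma partner₂_mem_Icc (hx : x ∈ Icc 1 n) (hd : d ∈ apDiffs n) : partner₂ n x d ∈ Icc 1 n := by
  simp only [apDiffs, mem_Ioc, mem_Icc, partner₂] at *; split_ifs <;> omega

lemma partner₁_injOn (n x : ℕ) : Set.InjOn (partner₁ n x) (apDiffs n) := by
  intro d hd d' hd' h
  simp only [apDiffs, coe_Ioc, Set.mem_Ioc, partner₁] at *; split_ifs at h <;> omega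

lemma partner₂_injOn (n x : ℕ) : Set.InjOn (partner₂ n x) (apDiffs n) := by
  intro d hd d' hd' h
  simp only [apDiffs, coe_Ioc, Set.mem_Ioc, partner₂] at *; split_ifs at h <;> omega

lemma partner₁_ne_partner₂ (hd : d ∈ apDiffs n) (hd' : d' ∈ apDiffs n) :
    partner₁ n x d ≠ partner₂ n x d' := by
  simp only [apDiffs, mem_Ioc, partner₁, partner₂] at *; split_ifs <;> omega

lemma add_partner₂ (hd : d ∈ apDiffs n) : x + partner₂ n x d = 2 * partner₁ n x d := by
  simp only [apDiffs, mem_Ioc, partner₁, partner₂] at *; split_ifs <;> omega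

lemma ne_partner₂ (hd : d ∈ apDiffs n) : x ≠ partner₂ n x d := by
  simp only [apDiffs, mem_Ioc, partner₂] at *; split_ifs <;> omega

lemma div_eight_le_card_goodDiffs_add (hx : x ∈ Icc 1 n) (G : Finset ℕ) :
    n / 8 ≤ #(goodDiffs n x G) + 2 * #(Icc 1 n \ G) := by
  rw [← card_apDiffs n]
  exact card_le_card_filter_add_two_mul_card_sdiff (partner₁_injOn n x) (partner₂_injOn n x)
    (fun d hd => partner₁_mem_Icc hx hd) (fun d hd => partner₂_mem_Icc hx hd)

end Partners

/-- A 3-AP with end point `x` and difference `d`, colored `ℓ` at `x` and `u`, `v` at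
`partner₁ n x d`, `partner₂ n x d`, as an element of the set counted by `Rtemp`. -/
def rainbowTuple {r : ℕ} (n : ℕ) (t : Σ _ : ℕ, ℕ × Fin r × Fin r × Fin r) :
    (ℕ × ℕ) × Fin r × Fin r × Fin r :=
  if t.1 ≤ n / 2 then ((t.1, t.2.1), t.2.2.1, t.2.2.2.1, t.2.2.2.2)
  else ((t.1 - 2 * t.2.1, t.2.1), t.2.2.2.2, t.2.2.2.1, t.2.2.1)

def rainbowDomain {r : ℕ} (n : ℕ) (P : ℕ → Finset (Fin r)) (i j : Fin r) :
    Finset (Σ _ : ℕ, ℕ × Fin r × Fin r × Fin r) :=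
  {x ∈ Icc 1 n | ¬P x ⊆ {i, j}}.sigma fun x =>
    goodDiffs n x {y ∈ Icc 1 n | P y = {i, j}} ×ˢ ((P x \ {i, j}) ×ˢ {(i, j), (j, i)})

section RainbowDomain

variable {r n : ℕ} {P : ℕ → Finset (Fin r)} {i j : Fin r}

lemma two_mul_sum_card_goodDiffs_le_card_rainbowDomain (hij : i ≠ j) :
    ∑ x ∈ Icc 1 n with ¬P x ⊆ {i, j}, 2 * #(goodDiffs n x {y ∈ Icc 1 n | P y = {i, j}}) ≤
      #(rainbowDomain n P i j) := by
  rw [rainbowDomain, card_sigma]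
  refine sum_le_sum fun x hx => ?_
  have hℓ : 0 < #(P x \ {i, j}) := card_pos.2 (sdiff_nonempty.2 (mem_filter.1 hx).2)
  rw [card_product, card_product, card_pair (by simp [hij])]
  nlinarith

lemma of_mem_rainbowDomain (hij : i ≠ j) {x d : ℕ} {ℓ u v : Fin r}
    (ht : ⟨x, d, ℓ, u, v⟩ ∈ rainbowDomain n P i j) :
    x ∈ Icc 1 n ∧ d ∈ apDiffs n ∧ P (partner₁ n x d) = {i, j} ∧
      P (partner₂ n x d) = {i, j} ∧ ℓ ∈ P x ∧ ℓ ∉ ({i, j} : Finset (Fin r)) ∧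
      u ∈ ({i, j} : Finset (Fin r)) ∧ v ∈ ({i, j} : Finset (Fin r)) ∧ u ≠ v := by
  simp only [rainbowDomain, goodDiffs, mem_sigma, mem_product, mem_filter, mem_sdiff, mem_insert,
    mem_singleton, Prod.mk.injEq] at ht
  obtain ⟨⟨hx, -⟩, ⟨hd, ⟨-, h₁⟩, ⟨-, h₂⟩⟩, ⟨hℓ, hℓij⟩, huv⟩ := ht
  refine ⟨hx, hd, h₁, h₂, hℓ, by simpa using hℓij, ?_⟩
  rcases huv with ⟨rfl, rfl⟩ | ⟨rfl, rfl⟩ <;> simp [hij, hij.symm]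

lemma card_rainbowDomain_le_Rtemp (hij : i ≠ j) : #(rainbowDomain n P i j) ≤ Rtemp n P := by
  refine card_le_card_of_injOn (rainbowTuple n) ?_ ?_
  · rintro ⟨x, d, ℓ, u, v⟩ ht
    obtain ⟨hx, hd, h₁, h₂, hℓ, hℓij, hu, hv, huv⟩ := of_mem_rainbowDomain hij ht
    simp only [apDiffs, mem_Ioc, mem_Icc] at hx hd
    unfold partner₁ at h₁
    unfold partner₂ at h₂
    by_cases hxn : x ≤ n / 2
    · rw [if_pos hxn] at h₁ h₂
      simp only [rainbowTuple, if_pos hxn, coe_filter, mem_product, mem_Icc, mem_univ, and_true,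
        Set.mem_ofPred_eq]
      refine ⟨⟨hx, by omega, by omega⟩, by omega, hℓ, h₁ ▸ hu, h₂ ▸ hv, ?_, huv, ?_⟩ <;>
        rintro rfl <;> contradiction
    · rw [if_neg hxn] at h₁ h₂
      simp only [rainbowTuple, if_neg hxn, coe_filter, mem_product, mem_Icc, mem_univ, and_true,
        Set.mem_ofPred_eq]
      refine ⟨⟨by omega, by omega, by omega⟩, by omega, h₂ ▸ hv, ?_, ?_, huv.symm, ?_, ?_⟩
      · rwa [show x - 2 * d + d = x - d by omega, h₁]
      · rwa [show x - 2 * d + 2 * d = x by omega]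
      all_goals rintro rfl; contradiction
  · rintro ⟨x, d, ℓ, u, v⟩ ht ⟨x', d', ℓ', u', v'⟩ ht' h
    obtain ⟨-, hd, -, -, -, hℓ, -, hv, -⟩ := of_mem_rainbowDomain hij ht
    obtain ⟨-, hd', -, -, -, hℓ', -, hv', -⟩ := of_mem_rainbowDomain hij ht'
    simp only [apDiffs, mem_Ioc] at hd hd'
    simp only [rainbowTuple] at h
    split_ifs at h with hx hx' hx' <;> simp only [Prod.mk.injEq] at h
    · obtain ⟨⟨rfl, rfl⟩, rfl, rfl, rfl⟩ := h; rfl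
    · exact absurd (h.2.1 ▸ hv') hℓ
    · exact absurd (h.2.1 ▸ hv) hℓ'
    · obtain ⟨⟨hxx, rfl⟩, rfl, rfl, rfl⟩ := h
      obtain rfl : x = x' := by omega
      rfl

lemma card_mul_le_Rtemp (hij : i ≠ j) :
    #{x ∈ Icc 1 n | ¬P x ⊆ {i, j}} * (2 * (n / 8 - 2 * (n - #{x ∈ Icc 1 n | P x = {i, j}}))) ≤
      Rtemp n P := by
  refine le_trans ?_ ((two_mul_sum_card_goodDiffs_le_card_rainbowDomain hij).trans
    (card_rainbowDomain_le_Rtemp hij))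
  rw [← smul_eq_mul, ← sum_const]
  refine sum_le_sum fun x hx => ?_
  have h := div_eight_le_card_goodDiffs_add (mem_filter.1 hx).1 {y ∈ Icc 1 n | P y = {i, j}}
  rw [card_sdiff_of_subset (filter_subset _ _), Nat.card_Icc] at h
  omega

end RainbowDomain

lemma fAP_le_sq (n : ℕ) : fAP n ≤ n ^ 2 := by
  refine (card_filter_le _ _).trans ?_
  rw [card_product, Nat.card_Icc, Nat.add_sub_cancel, sq]

lemma card_thirdColors_le {r n : ℕ} {P : ℕ → Finset (Fin r)} {i j : Fin r} (hij : i ≠ j)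
    (hn : 35 ≤ n) {δ : ℝ} (hδ : δ ≤ 1 / 80)
    (hR : (Rtemp n P : ℝ) ≤ (n : ℝ) ^ (-(1 / 3 : ℝ)) * fAP n)
    (hS : (1 - 2 * δ) * n ≤ (#{x ∈ Icc 1 n | P x = {i, j}} : ℝ)) :
    #{x ∈ Icc 1 n | ¬P x ⊆ {i, j}} ≤ ⌈10 * (n : ℝ) ^ ((2 : ℝ) / 3)⌉₊ := by
  set S := #{x ∈ Icc 1 n | P x = {i, j}}
  set T := #{x ∈ Icc 1 n | ¬P x ⊆ {i, j}}
  have hnR : (0 : ℝ) < n := by positivity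
  have hSn : S ≤ n := (card_filter_le _ _).trans (by simp)
  have hS' : 40 * (n - S) ≤ n := by
    have : (40 * (n - S) : ℕ) ≤ (n : ℝ) := by push_cast [hSn]; nlinarith
    exact_mod_cast this
  have hT : T * n ≤ 10 * Rtemp n P := by
    have := card_mul_le_Rtemp (n := n) (P := P) hij
    have : n ≤ 10 * (2 * (n / 8 - 2 * (n - S))) := by omega
    nlinarith
  have hTR : (T : ℝ) * n ≤ 10 * (n : ℝ) ^ ((2 : ℝ) / 3) * n := by
    have hf : (fAP n : ℝ) ≤ (n : ℝ) ^ 2 := by exact_mod_cast fAP_le_sq n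
    have : (n : ℝ) ^ (-(1 / 3 : ℝ)) * (n : ℝ) ^ 2 = (n : ℝ) ^ ((2 : ℝ) / 3) * n := by
      rw [← Real.rpow_natCast, ← Real.rpow_add hnR, ← Real.rpow_add_one hnR.ne']
      norm_num
    have : (T : ℝ) * n ≤ 10 * Rtemp n P := by exact_mod_cast hT
    nlinarith [Real.rpow_nonneg hnR.le (-(1 / 3 : ℝ))]
  exact_mod_cast (le_of_mul_le_mul_right hTR hnR).trans (Nat.le_ceil _)

open Classical in
noncomputable def rainbowFreeColorings {r : ℕ} (A : Finset ℕ) (i j : Fin r) (B : Finset ℕ) :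
    Finset (A → Fin r) :=
  {c | RainbowAPFree A c ∧ ∀ x : A, c x ∉ ({i, j} : Finset (Fin r)) ↔ x.1 ∈ B}

section Colorings

variable {r n : ℕ} {A B : Finset ℕ} {i j : Fin r} {c : A → Fin r}

lemma mem_rainbowFreeColorings :
    c ∈ rainbowFreeColorings A i j B ↔
      RainbowAPFree A c ∧ ∀ x : A, c x ∉ ({i, j} : Finset (Fin r)) ↔ x.1 ∈ B := by
  classical
  simp [rainbowFreeColorings]

lemma card_rainbowFreeColorings_le (hij : i ≠ j) (hBA : B ⊆ A) (Q : Finset ℕ)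
    (hQ : Q ⊆ A \ B)
    (hdet : ∀ c ∈ rainbowFreeColorings A i j B, ∀ c' ∈ rainbowFreeColorings A i j B,
      (∀ x : A, x.1 ∉ Q → c x = c' x) → c = c') :
    #(rainbowFreeColorings A i j B) ≤ r ^ #B * 2 ^ (#A - #B - #Q) := by
  classical
  refine (card_le_prod_of_eqOn _ (fun x : A => x.1 ∈ Q)
    (fun x => if x.1 ∈ B then univ else {i, j}) ?_ hdet).trans (le_of_eq ?_)
  · intro c hc x _
    split_ifs with hx
    · exact mem_univ _
    · by_contra h
      exact hx (((mem_rainbowFreeColorings.1 hc).2 x).1 h)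
  · simp only [apply_ite card, card_univ, Fintype.card_fin, card_pair hij]
    rw [prod_coe_sort A fun y => if y ∈ Q then 1 else if y ∈ B then r else 2, prod_ite,
      prod_const_one, one_mul, prod_ite, prod_const, prod_const, filter_filter, filter_filter]
    have hBQ : Disjoint B Q := disjoint_left.2 fun a ha haQ => (mem_sdiff.1 (hQ haQ)).2 ha
    have hB : {a ∈ A | a ∉ Q ∧ a ∈ B} = B := by
      ext a
      simp only [mem_filter]
      exact ⟨fun h => h.2.2, fun h => ⟨hBA h, disjoint_left.1 hBQ h, h⟩⟩
    have hrest : {a ∈ A | a ∉ Q ∧ a ∉ B} = A \ (B ∪ Q) := by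
      ext a; simp only [mem_filter, mem_sdiff, mem_union]; tauto
    rw [hB, hrest, card_sdiff_of_subset (union_subset hBA (hQ.trans sdiff_subset)),
      card_union_of_disjoint hBQ, Nat.sub_sub]

lemma mem_pair_iff_not_mem (hc : c ∈ rainbowFreeColorings A i j B) (x : A) :
    c x ∈ ({i, j} : Finset (Fin r)) ↔ x.1 ∉ B := by
  rw [← not_iff_not, not_not]
  exact (mem_rainbowFreeColorings.1 hc).2 x

lemma apply_partner₁_eq_apply_partner₂ (hc : c ∈ rainbowFreeColorings A i j B) {x₀ d : ℕ}
    (hx₀ : x₀ ∈ B) (hBA : B ⊆ A) (hd : d ∈ apDiffs n) (h₁ : partner₁ n x₀ d ∈ A \ B)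
    (h₂ : partner₂ n x₀ d ∈ A \ B) :
    c ⟨_, (mem_sdiff.1 h₁).1⟩ = c ⟨_, (mem_sdiff.1 h₂).1⟩ := by
  have hx₀c := (mem_pair_iff_not_mem hc ⟨x₀, hBA hx₀⟩).not.2 (not_not.2 hx₀)
  refine (mem_rainbowFreeColorings.1 hc).1.eq_of_ne (hBA hx₀) _ _ (ne_partner₂ hd)
    (add_partner₂ hd) ?_ ?_ <;> intro h <;> refine hx₀c (h ▸ (mem_pair_iff_not_mem hc _).2 ?_)
  exacts [(mem_sdiff.1 h₁).2, (mem_sdiff.1 h₂).2]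

/-- No first partner is a second partner, and rainbow-freeness makes the color at each second
partner copy the color at its first partner. -/
lemma eq_of_eqOn_partner₂ {x₀ : ℕ} (hx₀ : x₀ ∈ B) (hBA : B ⊆ A) :
    ∀ c ∈ rainbowFreeColorings A i j B, ∀ c' ∈ rainbowFreeColorings A i j B,
      (∀ x : A, x.1 ∉ (goodDiffs n x₀ (A \ B)).image (partner₂ n x₀) → c x = c' x) →
        c = c' := by
  intro c hc c' hc' h
  funext ⟨y, hy⟩
  by_cases hyQ : y ∈ (goodDiffs n x₀ (A \ B)).image (partner₂ n x₀)
  · obtain ⟨d, hd, rfl⟩ := mem_image.1 hyQ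
    obtain ⟨hd, h₁, h₂⟩ := mem_filter.1 hd
    have h₁Q : partner₁ n x₀ d ∉ (goodDiffs n x₀ (A \ B)).image (partner₂ n x₀) := by
      simp only [mem_image, not_exists, not_and]
      exact fun d' hd' => (partner₁_ne_partner₂ hd (mem_filter.1 hd').1).symm
    rw [← apply_partner₁_eq_apply_partner₂ hc hx₀ hBA hd h₁ h₂, h _ h₁Q,
      apply_partner₁_eq_apply_partner₂ hc' hx₀ hBA hd h₁ h₂]
  · exact h _ hyQ

lemma card_rainbowFreeColorings_mul_le (hij : i ≠ j) (hA : A ⊆ Icc 1 n)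
    (hBA : B ⊆ A) (hB : B.Nonempty) :
    #(rainbowFreeColorings A i j B) * 2 ^ (n / 8) ≤ r ^ #B * 2 ^ (#A + 2 * (n - #A + #B)) := by
  obtain ⟨x₀, hx₀⟩ := hB
  set G := goodDiffs n x₀ (A \ B)
  have hQ : G.image (partner₂ n x₀) ⊆ A \ B :=
    image_subset_iff.2 fun d hd => (mem_filter.1 hd).2.2
  have hQG : #(G.image (partner₂ n x₀)) = #G :=
    card_image_of_injOn ((partner₂_injOn n x₀).mono (coe_subset.2 (filter_subset _ _)))
  have hcount := card_rainbowFreeColorings_le hij hBA _ hQ (eq_of_eqOn_partner₂ hx₀ hBA)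
  have hG : n / 8 ≤ #G + 2 * #(Icc 1 n \ (A \ B)) :=
    div_eight_le_card_goodDiffs_add (hA (hBA hx₀)) (A \ B)
  have hAn : #A ≤ n := by simpa using card_le_card hA
  rw [card_sdiff_of_subset (sdiff_subset.trans hA), card_sdiff_of_subset hBA, Nat.card_Icc]
    at hG
  calc #(rainbowFreeColorings A i j B) * 2 ^ (n / 8)
      ≤ r ^ #B * 2 ^ (#A - #B - #G) * 2 ^ (n / 8) := by rw [← hQG]; gcongr
    _ ≤ r ^ #B * 2 ^ (#A + 2 * (n - #A + #B)) := by
      rw [mul_assoc, ← pow_add]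
      have := card_le_card hBA
      exact Nat.mul_le_mul_left _ (Nat.pow_le_pow_right two_pos (by omega))

lemma card_rainbowFreeColorings_empty_le (hij : i ≠ j) :
    #(rainbowFreeColorings A i j ∅) ≤ 2 ^ #A := by
  simpa using card_rainbowFreeColorings_le hij (empty_subset A) ∅ (empty_subset _)
    fun c _ c' _ h => funext fun x => h x (notMem_empty _)

lemma sum_card_rainbowFreeColorings_mul_le (hij : i ≠ j) (hn : 0 < n) (hA : A ⊆ Icc 1 n)
    (K : ℕ) :
    (∑ B ∈ A.powerset with #B ≤ K, #(rainbowFreeColorings A i j B)) * 2 ^ (n / 8) ≤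
      2 ^ #A * (2 ^ (n / 8) + (K + 1) * n ^ K * r ^ K * 2 ^ (2 * (n - #A + K))) := by
  have hAn : #A ≤ n := by simpa using card_le_card hA
  have hempty : ∅ ∈ {B ∈ A.powerset | #B ≤ K} := by simp
  have hterm : ∀ B ∈ {B ∈ A.powerset | #B ≤ K}.erase ∅,
      #(rainbowFreeColorings A i j B) * 2 ^ (n / 8) ≤ r ^ K * 2 ^ (#A + 2 * (n - #A + K)) := by
    intro B hB
    obtain ⟨hBne, hB⟩ := mem_erase.1 hB
    obtain ⟨hBA, hBK⟩ := mem_filter.1 hB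
    refine (card_rainbowFreeColorings_mul_le hij hA (mem_powerset.1 hBA)
      (nonempty_iff_ne_empty.2 hBne)).trans ?_
    gcongr
    exacts [i.pos, one_le_two]
  rw [← add_sum_erase _ _ hempty, add_mul, sum_mul, mul_add]
  gcongr
  · exact card_rainbowFreeColorings_empty_le hij
  · refine (sum_le_sum hterm).trans ?_
    rw [sum_const, smul_eq_mul]
    have := card_filter_powerset_card_le A K hn hAn
    calc #({B ∈ A.powerset | #B ≤ K}.erase ∅) * (r ^ K * 2 ^ (#A + 2 * (n - #A + K)))
        ≤ (K + 1) * n ^ K * (r ^ K * 2 ^ (#A + 2 * (n - #A + K))) := by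
          gcongr; exact (card_erase_le).trans this
      _ = _ := by ring

lemma natCard_le_sum_card_rainbowFreeColorings (hA : A ⊆ Icc 1 n) {K : ℕ}
    {p : (A → Fin r) → Prop}
    (hp : ∀ c, p c → RainbowAPFree A c ∧ ∃ P : ℕ → Finset (Fin r),
      #{x ∈ Icc 1 n | ¬P x ⊆ {i, j}} ≤ K ∧ ∀ (x : ℕ) (hx : x ∈ A), c ⟨x, hx⟩ ∈ P x) :
    Nat.card {c // p c} ≤ ∑ B ∈ A.powerset with #B ≤ K, #(rainbowFreeColorings A i j B) := by
  classical
  rw [Nat.card_eq_fintype_card, Fintype.card_subtype]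
  refine (card_le_card fun c hc => ?_).trans card_biUnion_le
  obtain ⟨hc, P, hPK, hcP⟩ := hp c (mem_filter.1 hc).2
  let B := {x ∈ A | ∃ hx : x ∈ A, c ⟨x, hx⟩ ∉ ({i, j} : Finset (Fin r))}
  have hBT : B ⊆ {x ∈ Icc 1 n | ¬P x ⊆ {i, j}} := fun x hx => by
    obtain ⟨hxA, hx, hcx⟩ := mem_filter.1 hx
    exact mem_filter.2 ⟨hA hxA, fun hP => hcx (hP (hcP x hx))⟩
  refine mem_biUnion.2 ⟨B, mem_filter.2 ⟨mem_powerset.2 (filter_subset _ _),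
    (card_le_card hBT).trans hPK⟩, mem_rainbowFreeColorings.2 ⟨hc, fun x => ?_⟩⟩
  simp [B, x.2]

end Colorings

lemma two_pow_sixty_le {r n : ℕ} (hn : (2000 * (r + 1)) ^ 6 ≤ n) : 2 ^ 60 ≤ n :=
  le_trans (by norm_num [pow_mul])
    ((Nat.pow_le_pow_left (by omega : 2 ^ 10 ≤ 2000 * (r + 1)) 6).trans hn)

lemma sixty_le_logb {r n : ℕ} (hn : (2000 * (r + 1)) ^ 6 ≤ n) : 60 ≤ Real.logb 2 n := by
  have h := two_pow_sixty_le hn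
  rw [Real.le_logb_iff_rpow_le one_lt_two (by exact_mod_cast h.trans_lt' (by norm_num))]
  exact_mod_cast h

lemma count_exponent_arith {u r K Ln Lr LK s N : ℝ} (hr : 0 ≤ r) (hu : 2000 * (r + 1) ≤ u)
    (hK0 : 0 ≤ K) (hK : K ≤ 10 * u ^ 4 + 1) (hLn : Ln ≤ 9 * u) (hLr : Lr ≤ 2 * r)
    (hLK : LK ≤ 2 * (K + 1)) (hs : s ≤ 18 * r * u ^ 5 + u ^ 6 / 1020) (hN : u ^ 6 / 8 - 1 ≤ N) :
    LK + K * Ln + K * Lr + 2 * (s + K) ≤ N - u ^ 6 / 240 := by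
  have hu1 : 1 ≤ u := by linarith
  have hKLn : K * Ln ≤ (10 * u ^ 4 + 1) * (9 * u) :=
    (mul_le_mul_of_nonneg_left hLn hK0).trans (by gcongr)
  have hKLr : K * Lr ≤ (10 * u ^ 4 + 1) * (2 * r) :=
    (mul_le_mul_of_nonneg_left hLr hK0).trans (by gcongr)
  have h45 : u ^ 4 ≤ u ^ 5 := pow_le_pow_right₀ hu1 (by norm_num)
  have h15 : u ≤ u ^ 5 := le_self_pow₀ hu1 (by norm_num)
  have h05 : 1 ≤ u ^ 5 := one_le_pow₀ hu1
  have hr45 : r * u ^ 4 ≤ r * u ^ 5 := by gcongr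
  have hr05 : r ≤ r * u ^ 5 := le_mul_of_one_le_right hr h05
  have hmain : (147 + 58 * r) * u ^ 5 ≤ u ^ 6 / 10 := by
    rw [show u ^ 6 / 10 = u / 10 * u ^ 5 by ring]
    gcongr
    linarith
  nlinarith

lemma count_exponent_le {r n K : ℕ} {s : ℝ} (hn : (2000 * (r + 1)) ^ 6 ≤ n)
    (hK : (K : ℝ) ≤ 10 * (n : ℝ) ^ ((2 : ℝ) / 3) + 1)
    (hs : s ≤ ((Real.logb 2 r - 1) * (n : ℝ) ^ (-(1 / 3 : ℝ)) * Real.logb 2 n +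
      1 / (34 * Real.logb 2 n)) * n) :
    Real.logb 2 (K + 1) + K * Real.logb 2 n + K * Real.logb 2 r + 2 * (s + K) ≤
      (n / 8 : ℕ) - (n : ℝ) / 240 := by
  have hn0 : (0 : ℝ) < n := by exact_mod_cast (two_pow_sixty_le hn).trans_lt' (by norm_num)
  set u : ℝ := (n : ℝ) ^ (1 / 6 : ℝ)
  have hnu : (n : ℝ) = u ^ 6 := by
    rw [← Real.rpow_natCast, ← Real.rpow_mul hn0.le]; norm_num
  have hu : 2000 * ((r : ℝ) + 1) ≤ u := by
    rw [← pow_le_pow_iff_left₀ (by positivity) (by positivity) (by norm_num : 6 ≠ 0), ← hnu]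
    exact_mod_cast hn
  have hn23 : (n : ℝ) ^ ((2 : ℝ) / 3) = u ^ 4 := by
    rw [← Real.rpow_natCast, ← Real.rpow_mul hn0.le]; norm_num
  have hn13 : (n : ℝ) ^ (-(1 / 3 : ℝ)) * n = u ^ 4 := by
    rw [← Real.rpow_add_one hn0.ne', ← Real.rpow_natCast, ← Real.rpow_mul hn0.le]; norm_num
  have hLn : Real.logb 2 n ≤ 9 * u := Real.logb_two_le_nine_mul_rpow hn0.le
  have hLn60 := sixty_le_logb hn
  have hLr : Real.logb 2 r ≤ 2 * r := Real.logb_two_le_two_mul r.cast_nonneg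
  have hs' : s ≤ 18 * r * u ^ 5 + u ^ 6 / 1020 := by
    have h₁ : (Real.logb 2 r - 1) * Real.logb 2 n ≤ 2 * r * (9 * u) := by nlinarith
    have h₂ : 1 / (34 * Real.logb 2 n) * n ≤ u ^ 6 / 1020 := by
      rw [← hnu, div_mul_eq_mul_div, one_mul]
      gcongr
      linarith
    calc s ≤ (Real.logb 2 r - 1) * Real.logb 2 n * ((n : ℝ) ^ (-(1 / 3 : ℝ)) * n) +
          1 / (34 * Real.logb 2 n) * n := by linarith
      _ ≤ 2 * r * (9 * u) * u ^ 4 + u ^ 6 / 1020 := by rw [hn13]; gcongr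
      _ = 18 * r * u ^ 5 + u ^ 6 / 1020 := by ring
  have hdiv : u ^ 6 / 8 - 1 ≤ (n / 8 : ℕ) := by
    have : (n : ℝ) ≤ 8 * (n / 8 : ℕ) + 7 := by exact_mod_cast (by omega : n ≤ 8 * (n / 8) + 7)
    linarith
  linarith [count_exponent_arith r.cast_nonneg hu K.cast_nonneg (hn23 ▸ hK) hLn hLr
    (Real.logb_two_le_two_mul (by positivity)) hs' hdiv]

lemma count_le_two_pow {r n K m : ℕ} (hr : 0 < r) (hn : (2000 * (r + 1)) ^ 6 ≤ n)
    (hK : (K : ℝ) ≤ 10 * (n : ℝ) ^ ((2 : ℝ) / 3) + 1)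
    (hm : (m : ℝ) ≤ ((Real.logb 2 r - 1) * (n : ℝ) ^ (-(1 / 3 : ℝ)) * Real.logb 2 n +
      1 / (34 * Real.logb 2 n)) * n) :
    (((K + 1) * n ^ K * r ^ K * 2 ^ (2 * (m + K)) : ℕ) : ℝ) ≤
      2 ^ (n / 8) * (2 : ℝ) ^ (-(n : ℝ) / 240) := by
  have hn0 : 0 < n := (two_pow_sixty_le hn).trans_lt' (by norm_num)
  rw [← Real.rpow_natCast (2 : ℝ) (n / 8), ← Real.rpow_add two_pos,
    ← Real.logb_le_iff_le_rpow one_lt_two (by positivity)]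
  push_cast
  rw [Real.logb_mul (by positivity) (by positivity), Real.logb_mul (by positivity) (by positivity),
    Real.logb_mul (by positivity) (by positivity), Real.logb_pow, Real.logb_pow, Real.logb_pow,
    Real.logb_self_eq_one one_lt_two]
  push_cast
  linarith [count_exponent_le hn hK hm]

theorem stmt_13_general (r : ℕ) :
    ∃ n₀ : ℕ, ∀ n : ℕ, n₀ ≤ n → ∀ δ ξ : ℝ, δ = 1 / (34 * Real.logb 2 n) →
      0 < ξ → ξ < (Real.logb 2 r - 1) * (n : ℝ) ^ (-(1/3 : ℝ)) * Real.logb 2 n + δ →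
      ∀ A : Finset ℕ, A ⊆ Finset.Icc 1 n → (A.card : ℝ) = (1 - ξ) * n →
      ∀ i j : Fin r, i ≠ j →
        (Nat.card {c : A → Fin r // RainbowAPFree A c ∧
            ∃ P : ℕ → Finset (Fin r), GoodTemplate n A P ∧
              (1 - 2 * δ) * n ≤
                (((Finset.Icc 1 n).filter fun x => P x = {i, j}).card : ℝ) ∧
              ∀ (x : ℕ) (hx : x ∈ A), c ⟨x, hx⟩ ∈ P x} : ℝ) ≤
          (2 : ℝ) ^ A.card * (1 + (2 : ℝ) ^ (-(n : ℝ) / 240)) := by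
  refine ⟨(2000 * (r + 1)) ^ 6, fun n hn δ ξ hδ _ hξ A hA hcard i j hij => ?_⟩
  have hn60 := two_pow_sixty_le hn
  have hAn : #A ≤ n := by simpa using card_le_card hA
  have hδ80 : δ ≤ 1 / 80 := by
    rw [hδ, div_le_div_iff₀ (by linarith [sixty_le_logb hn]) (by norm_num)]
    linarith [sixty_le_logb hn]
  set K := ⌈10 * (n : ℝ) ^ ((2 : ℝ) / 3)⌉₊
  have hsum := sum_card_rainbowFreeColorings_mul_le hij (by omega) hA K
  have hbound := count_le_two_pow (m := n - #A) i.pos hn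
    (Nat.ceil_lt_add_one (by positivity)).le (by rw [Nat.cast_sub hAn, hcard, ← hδ]; nlinarith)
  generalize (K + 1) * n ^ K * r ^ K * 2 ^ (2 * (n - #A + K)) = M at hsum hbound
  refine le_trans (Nat.cast_le.2
    (natCard_le_sum_card_rainbowFreeColorings hA (i := i) (j := j) (K := K) ?_)) ?_
  · rintro c ⟨hc, P, hP, hS, hcP⟩
    exact ⟨hc, P, card_thirdColors_le hij (by omega) hδ80 hP.2 hS, hcP⟩
  refine le_of_mul_le_mul_right ?_ (by positivity : (0 : ℝ) < 2 ^ (n / 8))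
  calc _ ≤ (2 : ℝ) ^ #A * (2 ^ (n / 8) + M) := by exact_mod_cast hsum
    _ ≤ 2 ^ #A * (2 ^ (n / 8) + 2 ^ (n / 8) * 2 ^ (-(n : ℝ) / 240)) := by gcongr
    _ = _ := by ring

theorem stmt_13 (r : ℕ) (hr : 3 ≤ r) :
    ∃ n₀ : ℕ, ∀ n : ℕ, n₀ ≤ n → ∀ δ ξ : ℝ, δ = 1 / (34 * Real.logb 2 n) →
      0 < ξ → ξ < (Real.logb 2 r - 1) * (n : ℝ) ^ (-(1/3 : ℝ)) * Real.logb 2 n + δ →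
      ∀ A : Finset ℕ, A ⊆ Finset.Icc 1 n → (A.card : ℝ) = (1 - ξ) * n →
      ∀ i j : Fin r, i ≠ j →
        (Nat.card {c : A → Fin r // RainbowAPFree A c ∧
            ∃ P : ℕ → Finset (Fin r), GoodTemplate n A P ∧
              (1 - 2 * δ) * n ≤
                (((Finset.Icc 1 n).filter fun x => P x = {i, j}).card : ℝ) ∧
              ∀ (x : ℕ) (hx : x ∈ A), c ⟨x, hx⟩ ∈ P x} : ℝ) ≤
          (2 : ℝ) ^ A.card * (1 + (2 : ℝ) ^ (-(n : ℝ) / 240)) :=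
  stmt_13_general r
end

section
/- For any positive integer n ≥ 1, integer r ≥ 3 and prime p ≥ 3, we have g_r(ℤ_{np}) ≥ C(r,2)·2^{np} − r² + 2r + p·r·(g_r(ℤ_n) − (r−1)·2^n + r − 2) + C(r,2)·p·(2^{(p−1)/(c·ord_p(2))} − 2)·(g_r(ℤ_n) − 2^n), where ord_p(2) is the multiplicative order of 2 modulo p, c = 1 if ord_p(2) is even, c = 2 if ord_p(2) is odd, and C(r,2) = r(r−1)/2. -/
set_option linter.unusedSectionVars false
set_option maxHeartbeats 1000000

/-- An `r`-coloring of `ZMod n` is rainbow 3-AP-free if no 3-AP `(x, y, z)`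
(meaning `x + z = 2y` and `y ≠ x`) receives three pairwise distinct colors. -/
def RainbowAPFreeZ {n r : ℕ} (c : ZMod n → Fin r) : Prop :=
  ∀ x y z : ZMod n, x + z = 2 * y → y ≠ x →
    (c x = c y ∨ c y = c z ∨ c x = c z)

/-- `gZ r n` is the number of rainbow 3-AP-free `r`-colorings of `ZMod n`. -/
noncomputable def gZ (r n : ℕ) : ℕ :=
  Nat.card {c : ZMod n → Fin r // RainbowAPFreeZ c}

namespace S14

def Noncst {α β : Type*} (g : α → β) : Prop := ¬ ∃ b, ∀ x, g x = b
def QQ {n r : ℕ} (i : Fin r) (f : ZMod n → Fin r) : Prop := ∃ j, ∀ a, f a = i ∨ f a = j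
def InPr {n r : ℕ} (i j : Fin r) (f : ZMod n → Fin r) : Prop := ∀ a, f a = i ∨ f a = j
abbrev Pairs (r : ℕ) := {q : Fin r × Fin r // q.1 < q.2}



def psi (n p : ℕ) (x : ZMod (n * p)) : ZMod p := (x.val : ZMod p)
def pi' (n p : ℕ) (x : ZMod (n * p)) : ZMod n := ((x.val / p : ℕ) : ZMod n)
def iota (n p : ℕ) (t : ZMod p) (a : ZMod n) : ZMod (n * p) :=
  ((t.val + p * a.val : ℕ) : ZMod (n * p))

variable {n p r : ℕ} [NeZero n] [NeZero p]

instance : NeZero (n * p) := ⟨Nat.mul_ne_zero (NeZero.ne n) (NeZero.ne p)⟩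

lemma val_iota (t : ZMod p) (a : ZMod n) : (iota n p t a).val = t.val + p * a.val := by
  apply ZMod.val_cast_of_lt
  have h1 := ZMod.val_lt t
  have h2 := ZMod.val_lt a
  have hp : 0 < p := Nat.pos_of_ne_zero (NeZero.ne p)
  nlinarith

lemma natCast_val_self (x : ZMod (n * p)) : ((x.val : ℕ) : ZMod (n * p)) = x := by
  rw [ZMod.natCast_val, ZMod.cast_id]

lemma psi_iota (t : ZMod p) (a : ZMod n) : psi n p (iota n p t a) = t := by
  unfold psi
  rw [val_iota]
  push_cast
  simp [ZMod.natCast_self, ZMod.natCast_val, ZMod.cast_id]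

lemma pi_iota (t : ZMod p) (a : ZMod n) : pi' n p (iota n p t a) = a := by
  unfold pi'
  rw [val_iota]
  have hp : 0 < p := Nat.pos_of_ne_zero (NeZero.ne p)
  rw [mul_comm p a.val, Nat.add_mul_div_right _ _ hp, Nat.div_eq_of_lt (ZMod.val_lt t)]
  simp [ZMod.natCast_val, ZMod.cast_id]

lemma coset_decomp {t : ZMod p} {x : ZMod (n * p)} (h : psi n p x = t) :
    x = iota n p t (pi' n p x) := by
  have hmod : x.val % p = t.val := by
    have := congrArg ZMod.val h
    rwa [psi, ZMod.val_natCast] at this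
  have hlt : x.val / p < n := by
    apply Nat.div_lt_of_lt_mul
    exact Nat.lt_of_lt_of_eq (ZMod.val_lt x) (mul_comm n p)
  have hval : (pi' n p x).val = x.val / p := by
    rw [pi', ZMod.val_natCast, Nat.mod_eq_of_lt hlt]
  conv_rhs => rw [iota, hval]
  rw [← hmod, Nat.mod_add_div, natCast_val_self]

lemma mod_np {x y z : ZMod (n * p)} (h : x + z = 2 * y) :
    x.val + z.val ≡ 2 * y.val [MOD n * p] := by
  have : ((x.val + z.val : ℕ) : ZMod (n * p)) = ((2 * y.val : ℕ) : ZMod (n * p)) := by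
    push_cast
    rw [natCast_val_self, natCast_val_self, natCast_val_self]
    exact h
  exact (ZMod.natCast_eq_natCast_iff _ _ _).mp this

lemma psi_add {x y z : ZMod (n * p)} (h : x + z = 2 * y) :
    psi n p x + psi n p z = 2 * psi n p y := by
  have h2 := (mod_np h).of_dvd (dvd_mul_left p n)
  have : ((x.val + z.val : ℕ) : ZMod p) = ((2 * y.val : ℕ) : ZMod p) :=
    (ZMod.natCast_eq_natCast_iff _ _ _).mpr h2
  unfold psi
  push_cast at this
  exact_mod_cast this

lemma ap_core {t : ZMod p} {x y z : ZMod (n * p)}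
    (hx : psi n p x = t) (hy : psi n p y = t) (hz : psi n p z = t)
    (h : x + z = 2 * y) : pi' n p x + pi' n p z = 2 * pi' n p y := by
  have hm := mod_np h
  have dx := congrArg ZMod.val (coset_decomp hx)
  have dy := congrArg ZMod.val (coset_decomp hy)
  have dz := congrArg ZMod.val (coset_decomp hz)
  rw [val_iota] at dx dy dz
  set a := (pi' n p x).val
  set b := (pi' n p y).val
  set c := (pi' n p z).val
  -- integer divisibility
  have hdvd : ((n * p : ℕ) : ℤ) ∣ ((2 * y.val : ℕ) : ℤ) - ((x.val + z.val : ℕ) : ℤ) := hm.dvd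
  have hdvd2 : (n : ℤ) ∣ ((a : ℤ) + c - 2 * b) := by
    have hp0 : (p : ℤ) ≠ 0 := by exact_mod_cast NeZero.ne p
    rw [dx, dy, dz] at hdvd
    have : ((p : ℤ) * n) ∣ (p : ℤ) * ((2 : ℤ) * b - (a + c)) := by
      push_cast at hdvd ⊢
      convert hdvd using 1 <;> ring
    have h2 := (mul_dvd_mul_iff_left hp0).mp this
    have h3 : (n : ℤ) ∣ -((2 : ℤ) * b - (a + c)) := dvd_neg.mpr h2
    convert h3 using 1
    ring
  have hz0 : (((a : ℤ) + c - 2 * b : ℤ) : ZMod n) = 0 :=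
    (ZMod.intCast_zmod_eq_zero_iff_dvd _ _).mpr hdvd2
  have : ((a : ZMod n) + c - 2 * b) = 0 := by push_cast at hz0; exact_mod_cast hz0
  have ha : ((a : ℕ) : ZMod n) = pi' n p x := by
    rw [ZMod.natCast_val, ZMod.cast_id]
  have hb : ((b : ℕ) : ZMod n) = pi' n p y := by
    rw [ZMod.natCast_val, ZMod.cast_id]
  have hc : ((c : ℕ) : ZMod n) = pi' n p z := by
    rw [ZMod.natCast_val, ZMod.cast_id]
  rw [ha, hb, hc] at this
  linear_combination this

lemma pi_ne {t : ZMod p} {x y : ZMod (n * p)}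
    (hx : psi n p x = t) (hy : psi n p y = t) (hne : y ≠ x) :
    pi' n p y ≠ pi' n p x := by
  intro hcon
  apply hne
  rw [coset_decomp hy, coset_decomp hx, hcon]

def colA {m r : ℕ} (i j : Fin r) (g : ZMod m → Bool) : ZMod m → Fin r :=
  fun x => bif g x then j else i

def colB (n p : ℕ) {r : ℕ} (t : ZMod p) (i : Fin r) (f : ZMod n → Fin r) :
    ZMod (n * p) → Fin r :=
  fun x => if psi n p x = t then f (pi' n p x) else i

def colC (n p : ℕ) [Fact p.Prime] {r : ℕ} (G : Subgroup (ZMod p)ˣ) (t : ZMod p) (i j : Fin r)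
    (h : (ZMod p)ˣ ⧸ G → Bool) (f : ZMod n → Fin r) : ZMod (n * p) → Fin r :=
  fun x =>
    if hx : psi n p x = t then f (pi' n p x)
    else bif h (QuotientGroup.mk (Units.mk0 (psi n p x - t) (sub_ne_zero_of_ne hx)))
      then i else j

lemma mem2 {α : Type*} {a b c i j : α} (ha : a = i ∨ a = j) (hb : b = i ∨ b = j)
    (hc : c = i ∨ c = j) : a = b ∨ b = c ∨ a = c := by
  rcases ha with rfl | rfl <;> rcases hb with hb | hb <;> rcases hc with hc | hc <;>
    simp_all

lemma rf_le2 {m : ℕ} {c : ZMod m → Fin r} (i j : Fin r) (hc : ∀ x, c x = i ∨ c x = j) :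
    RainbowAPFreeZ c := fun x y z _ _ => mem2 (hc x) (hc y) (hc z)

lemma rfA {m : ℕ} (i j : Fin r) (g : ZMod m → Bool) : RainbowAPFreeZ (colA i j g) :=
  rf_le2 i j fun x => by unfold colA; cases g x <;> simp

section prime
variable (hp : p.Prime) (hp3 : 3 ≤ p)
include hp hp3

lemma two_ne_zero' : (2 : ZMod p) ≠ 0 := by
  haveI : Fact p.Prime := ⟨hp⟩
  intro h
  have : (p : ℕ) ∣ 2 := by
    have : ((2 : ℕ) : ZMod p) = 0 := by exact_mod_cast h
    exact (ZMod.natCast_eq_zero_iff 2 p).mp this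
  have := Nat.le_of_dvd (by norm_num) this
  omega

lemma psi_forced_z {t : ZMod p} {x y z : ZMod (n * p)} (h : x + z = 2 * y)
    (hx : psi n p x = t) (hy : psi n p y = t) : psi n p z = t := by
  have := psi_add h
  rw [hx, hy] at this
  linear_combination this

lemma psi_forced_x {t : ZMod p} {x y z : ZMod (n * p)} (h : x + z = 2 * y)
    (hy : psi n p y = t) (hz : psi n p z = t) : psi n p x = t := by
  have := psi_add h
  rw [hy, hz] at this
  linear_combination this

lemma psi_forced_y {t : ZMod p} {x y z : ZMod (n * p)} (h : x + z = 2 * y)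
    (hx : psi n p x = t) (hz : psi n p z = t) : psi n p y = t := by
  haveI : Fact p.Prime := ⟨hp⟩
  have h2 := psi_add h
  rw [hx, hz] at h2
  have h2' : (2 : ZMod p) * t = 2 * psi n p y := by linear_combination h2
  exact (mul_left_cancel₀ (two_ne_zero' hp hp3) h2').symm

lemma rfB {t : ZMod p} {i : Fin r} {f : ZMod n → Fin r} (hf : RainbowAPFreeZ f) :
    RainbowAPFreeZ (colB n p t i f) := by
  intro x y z hap hne
  by_cases hx : psi n p x = t <;> by_cases hy : psi n p y = t <;>
    by_cases hz : psi n p z = t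
  · simp only [colB, if_pos hx, if_pos hy, if_pos hz]
    exact hf _ _ _ (ap_core hx hy hz hap) (pi_ne hx hy hne)
  · exact absurd (psi_forced_z hp hp3 hap hx hy) hz
  · exact absurd (psi_forced_y hp hp3 hap hx hz) hy
  · simp only [colB, if_pos hx, if_neg hy, if_neg hz]
    tauto
  · exact absurd (psi_forced_x hp hp3 hap hy hz) hx
  · simp only [colB, if_neg hx, if_pos hy, if_neg hz]
    tauto
  · simp only [colB, if_neg hx, if_neg hy, if_pos hz]
    tauto
  · simp only [colB, if_neg hx, if_neg hy, if_neg hz]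
    tauto

end prime

section primeG
variable [Fact p.Prime]

lemma two_ne_zero'' (hp3 : 3 ≤ p) : (2 : ZMod p) ≠ 0 := two_ne_zero' Fact.out hp3

lemma mk0_congr {a b : ZMod p} (h : a = b) (ha : a ≠ 0) (hb : b ≠ 0) :
    Units.mk0 a ha = Units.mk0 b hb := by subst h; rfl

lemma mk_mul_mem {G : Subgroup (ZMod p)ˣ} {g : (ZMod p)ˣ} (hg : g ∈ G) (v : (ZMod p)ˣ) :
    (QuotientGroup.mk (g * v) : (ZMod p)ˣ ⧸ G) = QuotientGroup.mk v := by
  rw [QuotientGroup.eq]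
  have hcalc : (g * v)⁻¹ * v = g⁻¹ := by
    rw [mul_inv_rev, mul_comm v⁻¹ g⁻¹, mul_assoc, inv_mul_cancel, mul_one]
  rw [hcalc]
  exact inv_mem hg

lemma cls_two (hp3 : 3 ≤ p) {G : Subgroup (ZMod p)ˣ}
    (hu2 : Units.mk0 (2 : ZMod p) (two_ne_zero'' hp3) ∈ G)
    {w : ZMod p} (hw : w ≠ 0) (hw2 : 2 * w ≠ 0) :
    (QuotientGroup.mk (Units.mk0 (2 * w) hw2) : (ZMod p)ˣ ⧸ G) =
      QuotientGroup.mk (Units.mk0 w hw) := by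
  have : Units.mk0 (2 * w) hw2 = Units.mk0 (2 : ZMod p) (two_ne_zero'' hp3) * Units.mk0 w hw :=
    Units.ext rfl
  rw [this]
  exact mk_mul_mem hu2 _

lemma cls_neg {G : Subgroup (ZMod p)ˣ} (hneg : (-1 : (ZMod p)ˣ) ∈ G)
    {w : ZMod p} (hw : w ≠ 0) (hw2 : -w ≠ 0) :
    (QuotientGroup.mk (Units.mk0 (-w) hw2) : (ZMod p)ˣ ⧸ G) =
      QuotientGroup.mk (Units.mk0 w hw) := by
  have : Units.mk0 (-w) hw2 = (-1 : (ZMod p)ˣ) * Units.mk0 w hw := Units.ext (by simp)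
  rw [this]
  exact mk_mul_mem hneg _

lemma colC_out {G : Subgroup (ZMod p)ˣ} {t : ZMod p} {i j : Fin r}
    {h : (ZMod p)ˣ ⧸ G → Bool} {f : ZMod n → Fin r} {x : ZMod (n * p)}
    (hx : psi n p x ≠ t) :
    colC n p G t i j h f x =
      (bif h (QuotientGroup.mk (Units.mk0 (psi n p x - t) (sub_ne_zero_of_ne hx)))
        then i else j) := dif_neg hx

lemma colC_out_mem {G : Subgroup (ZMod p)ˣ} {t : ZMod p} {i j : Fin r}
    {h : (ZMod p)ˣ ⧸ G → Bool} {f : ZMod n → Fin r} {x : ZMod (n * p)}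
    (hx : psi n p x ≠ t) :
    colC n p G t i j h f x = i ∨ colC n p G t i j h f x = j := by
  rw [colC_out hx]
  cases h (QuotientGroup.mk (Units.mk0 (psi n p x - t) (sub_ne_zero_of_ne hx))) <;> simp

lemma rfC (hp3 : 3 ≤ p) {G : Subgroup (ZMod p)ˣ} {t : ZMod p} {i j : Fin r}
    {h : (ZMod p)ˣ ⧸ G → Bool} {f : ZMod n → Fin r}
    (hu2 : Units.mk0 (2 : ZMod p) (two_ne_zero'' hp3) ∈ G)
    (hneg : (-1 : (ZMod p)ˣ) ∈ G) (hf : RainbowAPFreeZ f) :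
    RainbowAPFreeZ (colC n p G t i j h f) := by
  have hp : p.Prime := Fact.out
  intro x y z hap hne
  by_cases hx : psi n p x = t <;> by_cases hy : psi n p y = t <;>
    by_cases hz : psi n p z = t
  · simp only [colC, dif_pos hx, dif_pos hy, dif_pos hz]
    exact hf _ _ _ (ap_core hx hy hz hap) (pi_ne hx hy hne)
  · exact absurd (psi_forced_z hp hp3 hap hx hy) hz
  · exact absurd (psi_forced_y hp hp3 hap hx hz) hy
  · -- x in coset, y z out : c y = c z
    right; left
    rw [colC_out hy, colC_out hz]
    have hrel : psi n p z - t = 2 * (psi n p y - t) := by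
      have := psi_add hap
      rw [hx] at this
      linear_combination this
    have hcls : (QuotientGroup.mk (Units.mk0 (psi n p z - t) (sub_ne_zero_of_ne hz))
        : (ZMod p)ˣ ⧸ G) =
        QuotientGroup.mk (Units.mk0 (psi n p y - t) (sub_ne_zero_of_ne hy)) := by
      rw [mk0_congr hrel _ (by rw [← hrel]; exact sub_ne_zero_of_ne hz)]
      exact cls_two hp3 hu2 _ _
    rw [hcls]
  · exact absurd (psi_forced_x hp hp3 hap hy hz) hx
  · -- y in coset : c x = c z
    right; right
    rw [colC_out hx, colC_out hz]
    have hrel : psi n p x - t = -(psi n p z - t) := by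
      have := psi_add hap
      rw [hy] at this
      linear_combination this
    have hcls : (QuotientGroup.mk (Units.mk0 (psi n p x - t) (sub_ne_zero_of_ne hx))
        : (ZMod p)ˣ ⧸ G) =
        QuotientGroup.mk (Units.mk0 (psi n p z - t) (sub_ne_zero_of_ne hz)) := by
      rw [mk0_congr hrel _ (by rw [← hrel]; exact sub_ne_zero_of_ne hx)]
      exact cls_neg hneg _ _
    rw [hcls]
  · -- z in coset : c x = c y
    left
    rw [colC_out hx, colC_out hy]
    have hrel : psi n p x - t = 2 * (psi n p y - t) := by
      have := psi_add hap
      rw [hz] at this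
      linear_combination this
    have hcls : (QuotientGroup.mk (Units.mk0 (psi n p x - t) (sub_ne_zero_of_ne hx))
        : (ZMod p)ˣ ⧸ G) =
        QuotientGroup.mk (Units.mk0 (psi n p y - t) (sub_ne_zero_of_ne hy)) := by
      rw [mk0_congr hrel _ (by rw [← hrel]; exact sub_ne_zero_of_ne hx)]
      exact cls_two hp3 hu2 _ _
    rw [hcls]
  · exact mem2 (colC_out_mem hx) (colC_out_mem hy) (colC_out_mem hz)

end primeG

section primeH
variable {p : ℕ} [Fact p.Prime]

noncomputable def u2 (p : ℕ) [Fact p.Prime] (hp3 : 3 ≤ p) : (ZMod p)ˣ :=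
  Units.mk0 (2 : ZMod p) (two_ne_zero'' hp3)

noncomputable def Gd (p : ℕ) [Fact p.Prime] (hp3 : 3 ≤ p) : Subgroup (ZMod p)ˣ :=
  Subgroup.zpowers (if Even (orderOf (2 : ZMod p)) then u2 p hp3 else - u2 p hp3)

lemma orderOf_u2 (hp3 : 3 ≤ p) : orderOf (u2 p hp3) = orderOf (2 : ZMod p) := by
  rw [← orderOf_units]
  rfl

lemma u2_pos_order (hp3 : 3 ≤ p) : 0 < orderOf (2 : ZMod p) := by
  rw [← orderOf_u2 hp3]
  exact orderOf_pos _

lemma u2_order_ne_one (hp3 : 3 ≤ p) : orderOf (2 : ZMod p) ≠ 1 := by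
  intro h
  have : (2 : ZMod p) = 1 := orderOf_eq_one_iff.mp h
  have h1 : (1 : ZMod p) = 0 := by linear_combination this
  exact one_ne_zero h1

lemma sq_eq_one_cases {a : ZMod p} (h : a ^ 2 = 1) : a = 1 ∨ a = -1 := by
  have : (a - 1) * (a + 1) = 0 := by linear_combination h
  rcases mul_eq_zero.mp this with h' | h'
  · left; linear_combination h'
  · right; linear_combination h'

lemma neg_one_mem_even (hp3 : 3 ≤ p) (he : Even (orderOf (2 : ZMod p))) :
    (-1 : (ZMod p)ˣ) ∈ Subgroup.zpowers (u2 p hp3) := by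
  set d := orderOf (2 : ZMod p) with hd
  have hdpos := u2_pos_order hp3
  have hd1 := u2_order_ne_one hp3
  have hk2 : d / 2 * 2 = d := Nat.div_mul_cancel he.two_dvd
  have hklt : d / 2 < d := Nat.div_lt_self hdpos (by norm_num)
  have hkne : d / 2 ≠ 0 := by omega
  have hsq : (u2 p hp3 ^ (d / 2)) ^ 2 = 1 := by
    rw [← pow_mul, hk2, hd, ← orderOf_u2 hp3, pow_orderOf_eq_one]
  have hne1 : u2 p hp3 ^ (d / 2) ≠ 1 := by
    apply pow_ne_one_of_lt_orderOf hkne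
    rw [orderOf_u2 hp3]; exact hklt
  have hval : ((u2 p hp3 ^ (d / 2) : (ZMod p)ˣ) : ZMod p) ^ 2 = 1 := by
    rw [← Units.val_pow_eq_pow_val, hsq, Units.val_one]
  rcases sq_eq_one_cases hval with h1 | h1
  · exact absurd (Units.ext h1) hne1
  · have : u2 p hp3 ^ (d / 2) = -1 := Units.ext (by rw [h1]; simp)
    exact Subgroup.mem_zpowers_iff.mpr ⟨((d / 2 : ℕ) : ℤ), by rw [zpow_natCast, this]⟩

lemma u2_mem_Gd (hp3 : 3 ≤ p) : u2 p hp3 ∈ Gd p hp3 := by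
  unfold Gd
  split_ifs with he
  · exact Subgroup.mem_zpowers _
  · -- odd case : u2 = (-u2)^(d+1)
    set d := orderOf (2 : ZMod p) with hd
    have hodd : Odd d := Nat.odd_iff.mpr (by
      rcases Nat.even_or_odd d with h | h
      · exact absurd h he
      · exact Nat.odd_iff.mp h)
    have hpow : (-u2 p hp3) ^ (d + 1) = u2 p hp3 := by
      rw [pow_succ, Odd.neg_pow hodd, hd, ← orderOf_u2 hp3, pow_orderOf_eq_one]
      simp
    exact Subgroup.mem_zpowers_iff.mpr ⟨((d + 1 : ℕ) : ℤ), by rw [zpow_natCast]; exact hpow⟩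

lemma neg_one_mem_Gd (hp3 : 3 ≤ p) : (-1 : (ZMod p)ˣ) ∈ Gd p hp3 := by
  unfold Gd
  split_ifs with he
  · exact neg_one_mem_even hp3 he
  · set d := orderOf (2 : ZMod p) with hd
    have hodd : Odd d := Nat.odd_iff.mpr (by
      rcases Nat.even_or_odd d with h | h
      · exact absurd h he
      · exact Nat.odd_iff.mp h)
    have hpow : (-u2 p hp3) ^ d = -1 := by
      rw [Odd.neg_pow hodd, hd, ← orderOf_u2 hp3, pow_orderOf_eq_one]
    exact Subgroup.mem_zpowers_iff.mpr ⟨((d : ℕ) : ℤ), by rw [zpow_natCast]; exact hpow⟩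

lemma card_Gd_le (hp3 : 3 ≤ p) :
    Nat.card (Gd p hp3) ≤
      (if Even (orderOf (2 : ZMod p)) then 1 else 2) * orderOf (2 : ZMod p) := by
  unfold Gd
  split_ifs with he
  · rw [Nat.card_zpowers, orderOf_u2 hp3, one_mul]
  · rw [Nat.card_zpowers]
    apply orderOf_le_of_pow_eq_one (by have := u2_pos_order hp3; omega)
    have : (-u2 p hp3) ^ (2 * orderOf (2 : ZMod p)) =
        ((-u2 p hp3) ^ 2) ^ orderOf (2 : ZMod p) := by rw [← pow_mul]
    rw [this, neg_sq, ← pow_mul, mul_comm 2, pow_mul, ← orderOf_u2 hp3, pow_orderOf_eq_one]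
    simp

lemma card_units' : Nat.card (ZMod p)ˣ = p - 1 := by
  haveI : NeZero p := ⟨Nat.Prime.ne_zero Fact.out⟩
  rw [Nat.card_eq_fintype_card, ZMod.card_units_eq_totient, Nat.totient_prime Fact.out]

lemma card_Gd_pos (hp3 : 3 ≤ p) : 0 < Nat.card (Gd p hp3) :=
  Nat.card_pos

lemma card_quot_eq (hp3 : 3 ≤ p) :
    Nat.card ((ZMod p)ˣ ⧸ Gd p hp3) = (p - 1) / Nat.card (Gd p hp3) := by
  have h := Subgroup.card_eq_card_quotient_mul_card_subgroup (Gd p hp3)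
  rw [card_units'] at h
  rw [h, Nat.mul_div_cancel _ (card_Gd_pos hp3)]

lemma quot_card_ge (hp3 : 3 ≤ p) :
    (p - 1) / ((if Even (orderOf (2 : ZMod p)) then 1 else 2) * orderOf (2 : ZMod p)) ≤
      Nat.card ((ZMod p)ˣ ⧸ Gd p hp3) := by
  rw [card_quot_eq hp3]
  exact Nat.div_le_div_left (card_Gd_le hp3) (card_Gd_pos hp3)

lemma quot_card_pos (hp3 : 3 ≤ p) : 0 < Nat.card ((ZMod p)ˣ ⧸ Gd p hp3) :=
  Nat.card_pos

end primeH

section counting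

lemma card_subtype_add {α : Type*} [Finite α] (P : α → Prop) :
    Nat.card {x // P x} + Nat.card {x // ¬ P x} = Nat.card α := by
  classical
  cases nonempty_fintype α
  rw [Nat.card_eq_fintype_card, Nat.card_eq_fintype_card, Nat.card_eq_fintype_card,
    Fintype.card_subtype_compl]
  have := Fintype.card_subtype_le P
  omega

lemma card_cst {α : Type*} [Finite α] [Nonempty α] :
    Nat.card {g : α → Bool // ¬ Noncst g} = 2 := by
  have e : Bool ≃ {g : α → Bool // ¬ Noncst g} :=
    { toFun := fun b => ⟨fun _ => b, not_not_intro ⟨b, fun _ => rfl⟩⟩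
      invFun := fun g => g.1 (Classical.arbitrary α)
      left_inv := fun b => rfl
      right_inv := fun ⟨g, hg⟩ => by
        obtain ⟨b, hb⟩ := not_not.mp hg
        exact Subtype.ext (funext fun x =>
          show g (Classical.arbitrary α) = g x by rw [hb, hb]) }
  rw [← Nat.card_congr e, Nat.card_eq_fintype_card, Fintype.card_bool]

lemma card_noncst {α : Type*} [Finite α] [Nonempty α] :
    Nat.card {g : α → Bool // Noncst g} = 2 ^ (Nat.card α) - 2 := by
  have h1 := card_subtype_add (fun g : α → Bool => Noncst g)
  rw [card_cst, Nat.card_fun] at h1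
  have hb : Nat.card Bool = 2 := by rw [Nat.card_eq_fintype_card, Fintype.card_bool]
  rw [hb] at h1
  omega

lemma two_le_pow_card {α : Type*} [Finite α] [Nonempty α] : 2 ≤ 2 ^ (Nat.card α) := by
  have : 0 < Nat.card α := Nat.card_pos
  calc 2 = 2 ^ 1 := rfl
  _ ≤ 2 ^ (Nat.card α) := Nat.pow_le_pow_right (by norm_num) this

-- 2-subsets
lemma two_set {r : ℕ} {s : Finset (Fin r)} (hs : s.card = 2) :
    ∃ (i j : Fin r), i < j ∧ s = {i, j} := by
  obtain ⟨x, y, hxy, rfl⟩ := Finset.card_eq_two.mp hs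
  rcases lt_or_gt_of_ne hxy with h | h
  · exact ⟨x, y, h, rfl⟩
  · exact ⟨y, x, h, by rw [Finset.pair_comm]⟩

lemma two_set_ne {r : ℕ} (s : {s : Finset (Fin r) // s.card = 2}) : s.1.Nonempty :=
  Finset.card_pos.mp (by rw [s.2]; norm_num)

lemma two_set_lt {r : ℕ} (s : {s : Finset (Fin r) // s.card = 2}) :
    s.1.min' (two_set_ne s) < s.1.max' (two_set_ne s) :=
  Finset.min'_lt_max'_of_card _ (by rw [s.2]; norm_num)

lemma two_set_eq {r : ℕ} (s : {s : Finset (Fin r) // s.card = 2}) :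
    s.1 = {s.1.min' (two_set_ne s), s.1.max' (two_set_ne s)} := by
  apply (Finset.eq_of_subset_of_card_le _ _).symm
  · intro a ha
    rcases Finset.mem_insert.mp ha with h | h
    · rw [h]; exact Finset.min'_mem _ _
    · rw [Finset.mem_singleton.mp h]; exact Finset.max'_mem _ _
  · rw [s.2, Finset.card_pair (ne_of_lt (two_set_lt s))]

lemma card_pairs_ge (r : ℕ) : r.choose 2 ≤ Nat.card (Pairs r) := by
  classical
  have hcard : Nat.card {s : Finset (Fin r) // s.card = 2} = r.choose 2 := by
    rw [Nat.card_eq_fintype_card, Fintype.card_finset_len, Fintype.card_fin]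
  rw [← hcard]
  apply Nat.card_le_card_of_injective
    (f := fun s => ⟨(s.1.min' (two_set_ne s), s.1.max' (two_set_ne s)), two_set_lt s⟩)
  intro s s' h
  have e1 : ((s.1.min' (two_set_ne s), s.1.max' (two_set_ne s)) : Fin r × Fin r)
      = (s'.1.min' (two_set_ne s'), s'.1.max' (two_set_ne s')) := congrArg Subtype.val h
  rw [Prod.mk.injEq] at e1
  apply Subtype.ext
  rw [two_set_eq s, two_set_eq s', e1.1, e1.2]



lemma card_exists_true : Nat.card {g : ZMod n → Bool // ∃ x, g x = true} = 2 ^ n - 1 := by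
  have h1 := card_subtype_add (fun g : ZMod n → Bool => ∃ x, g x = true)
  have h2 : Nat.card {g : ZMod n → Bool // ¬ ∃ x, g x = true} = 1 := by
    rw [Nat.card_eq_one_iff_unique]
    constructor
    · constructor
      intro g g'
      apply Subtype.ext
      funext a
      have hg := g.2
      have hg' := g'.2
      push_neg at hg hg'
      simp only [ne_eq, Bool.not_eq_true] at hg hg'
      rw [hg, hg']
    · exact ⟨⟨fun _ => false, by push_neg; intro x; simp⟩⟩
  have h3 : Nat.card (ZMod n → Bool) = 2 ^ n := by
    rw [Nat.card_fun]
    have hb : Nat.card Bool = 2 := by rw [Nat.card_eq_fintype_card, Fintype.card_bool]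
    have hz : Nat.card (ZMod n) = n := Nat.card_zmod n
    rw [hb, hz]
  rw [h2, h3] at h1
  exact Nat.eq_sub_of_add_eq h1

lemma card_fun_bool : Nat.card (ZMod n → Bool) = 2 ^ n := by
  rw [Nat.card_fun]
  have hb : Nat.card Bool = 2 := by rw [Nat.card_eq_fintype_card, Fintype.card_bool]
  rw [hb, Nat.card_zmod]

lemma card_ne_i (hr : 3 ≤ r) (i : Fin r) : Nat.card {j : Fin r // j ≠ i} = r - 1 := by
  have h1 := card_subtype_add (fun j : Fin r => j = i)
  have h2 : Nat.card {j : Fin r // j = i} = 1 := by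
    rw [Nat.card_eq_fintype_card, Fintype.card_subtype_eq]
  have h3 : Nat.card (Fin r) = r := by rw [Nat.card_eq_fintype_card, Fintype.card_fin]
  have h4 : Nat.card {j : Fin r // ¬ j = i} = Nat.card {j : Fin r // j ≠ i} := rfl
  omega

lemma card_QQ_le (hr : 3 ≤ r) (i : Fin r) :
    Nat.card {f : ZMod n → Fin r // QQ i f} ≤ 1 + (r - 1) * (2 ^ n - 1) := by
  classical
  have hb : Nat.card (Unit ⊕ ({j : Fin r // j ≠ i} × {g : ZMod n → Bool // ∃ x, g x = true}))
      = 1 + (r - 1) * (2 ^ n - 1) := by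
    rw [Nat.card_sum, Nat.card_prod, card_ne_i hr i, card_exists_true]
    simp
  rw [← hb]
  apply Nat.card_le_card_of_injective (f := fun f =>
    if h : ∀ a, f.1 a = i then Sum.inl ()
    else Sum.inr (⟨f.1 (not_forall.mp h).choose, (not_forall.mp h).choose_spec⟩,
      ⟨fun a => decide (f.1 a ≠ i), ⟨(not_forall.mp h).choose,
        by simp [(not_forall.mp h).choose_spec]⟩⟩))
  intro f f' hff
  dsimp only at hff
  by_cases h : ∀ a, f.1 a = i <;> by_cases h' : ∀ a, f'.1 a = i
  · exact Subtype.ext (funext fun a => by rw [h a, h' a])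
  · rw [dif_pos h, dif_neg h'] at hff
    exact absurd hff (by simp)
  · rw [dif_neg h, dif_pos h'] at hff
    exact absurd hff (by simp)
  · rw [dif_neg h, dif_neg h'] at hff
    rw [Sum.inr.injEq, Prod.mk.injEq, Subtype.mk.injEq, Subtype.mk.injEq] at hff
    obtain ⟨hval, hg⟩ := hff
    obtain ⟨jw, hjw⟩ := f.2
    obtain ⟨jw', hjw'⟩ := f'.2
    have key : ∀ a, f.1 a ≠ i → f.1 a = f.1 (not_forall.mp h).choose := by
      intro a ha
      rcases hjw a with h1 | h1
      · exact absurd h1 ha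
      · rcases hjw (not_forall.mp h).choose with h2 | h2
        · exact absurd h2 (not_forall.mp h).choose_spec
        · rw [h1, h2]
    have key' : ∀ a, f'.1 a ≠ i → f'.1 a = f'.1 (not_forall.mp h').choose := by
      intro a ha
      rcases hjw' a with h1 | h1
      · exact absurd h1 ha
      · rcases hjw' (not_forall.mp h').choose with h2 | h2
        · exact absurd h2 (not_forall.mp h').choose_spec
        · rw [h1, h2]
    apply Subtype.ext
    funext a
    have hga := congrFun hg a
    by_cases hai : f.1 a = i
    · have h1 : decide (f.1 a ≠ i) = false := by simp [hai]
      rw [hga] at h1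
      have h2 := of_decide_eq_false h1
      rw [hai, not_not.mp h2]
    · have h1 : decide (f.1 a ≠ i) = true := by simp [hai]
      rw [hga] at h1
      have hai' := of_decide_eq_true h1
      rw [key a hai, key' a hai', hval]

lemma card_InPr_le (i j : Fin r) (hij : i ≠ j) :
    Nat.card {f : ZMod n → Fin r // InPr i j f} ≤ 2 ^ n := by
  rw [← card_fun_bool (n := n)]
  apply Nat.card_le_card_of_injective (f := fun f => fun a => decide (f.1 a = j))
  intro f f' hff
  dsimp only at hff
  apply Subtype.ext
  funext a
  have hga := congrFun hff a
  by_cases haj : f.1 a = j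
  · have h1 : decide (f.1 a = j) = true := decide_eq_true haj
    rw [hga] at h1
    rw [haj, of_decide_eq_true h1]
  · have h1 : decide (f.1 a = j) = false := decide_eq_false haj
    rw [hga] at h1
    have haj' := of_decide_eq_false h1
    rcases f.2 a with h2 | h2
    · rcases f'.2 a with h3 | h3
      · rw [h2, h3]
      · exact absurd h3 haj'
    · exact absurd h2 haj

lemma gZ_split (P : (ZMod n → Fin r) → Prop) :
    Nat.card {f : ZMod n → Fin r // RainbowAPFreeZ f ∧ P f} +
      Nat.card {f : ZMod n → Fin r // RainbowAPFreeZ f ∧ ¬ P f} = gZ r n := by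
  classical
  have e1 : {f : {f : ZMod n → Fin r // RainbowAPFreeZ f} // P f.1} ≃
      {f : ZMod n → Fin r // RainbowAPFreeZ f ∧ P f} :=
    Equiv.subtypeSubtypeEquivSubtypeInter (fun f => RainbowAPFreeZ f) P
  have e2 : {f : {f : ZMod n → Fin r // RainbowAPFreeZ f} // ¬ P f.1} ≃
      {f : ZMod n → Fin r // RainbowAPFreeZ f ∧ ¬ P f} :=
    Equiv.subtypeSubtypeEquivSubtypeInter (fun f => RainbowAPFreeZ f) (fun f => ¬ P f)
  rw [← Nat.card_congr e1, ← Nat.card_congr e2]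
  exact card_subtype_add _

lemma gZ_lower (hr : 3 ≤ r) : 2 ^ n ≤ gZ r n := by
  have h1 : (1 : ℕ) < r := by omega
  have h0 : (0 : ℕ) < r := by omega
  rw [← card_fun_bool (n := n)]
  apply Nat.card_le_card_of_injective (f := fun g => (⟨fun a => bif g a then ⟨1, h1⟩
    else ⟨0, h0⟩, rf_le2 (⟨1, h1⟩ : Fin r) (⟨0, h0⟩ : Fin r)
      (fun a => by cases g a <;> simp)⟩ :
    {c : ZMod n → Fin r // RainbowAPFreeZ c}))
  intro g g' hgg
  funext a
  have hv := congrFun (congrArg Subtype.val hgg) a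
  dsimp only at hv
  cases hga : g a <;> cases hga' : g' a <;> rw [hga, hga'] at hv <;> simp_all

end counting

section families
variable {n p r : ℕ} [NeZero n] [NeZero p] [Fact p.Prime]

lemma colB_in {t : ZMod p} {i : Fin r} {f : ZMod n → Fin r} {x : ZMod (n * p)}
    (hx : psi n p x = t) : colB n p t i f x = f (pi' n p x) := if_pos hx

lemma colB_out {t : ZMod p} {i : Fin r} {f : ZMod n → Fin r} {x : ZMod (n * p)}
    (hx : ¬ psi n p x = t) : colB n p t i f x = i := if_neg hx

lemma colB_iota (t : ZMod p) (i : Fin r) (f : ZMod n → Fin r) (a : ZMod n) :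
    colB n p t i f (iota n p t a) = f a := by
  rw [colB_in (psi_iota t a), pi_iota]

lemma colC_in {G : Subgroup (ZMod p)ˣ} {t : ZMod p} {i j : Fin r}
    {h : (ZMod p)ˣ ⧸ G → Bool} {f : ZMod n → Fin r} {x : ZMod (n * p)}
    (hx : psi n p x = t) : colC n p G t i j h f x = f (pi' n p x) := dif_pos hx

lemma colC_iota (G : Subgroup (ZMod p)ˣ) (t : ZMod p) (i j : Fin r)
    (h : (ZMod p)ˣ ⧸ G → Bool) (f : ZMod n → Fin r) (a : ZMod n) :
    colC n p G t i j h f (iota n p t a) = f a := by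
  rw [colC_in (psi_iota t a), pi_iota]

lemma colC_iota_out {G : Subgroup (ZMod p)ˣ} {t v : ZMod p} {i j : Fin r}
    {h : (ZMod p)ˣ ⧸ G → Bool} {f : ZMod n → Fin r} (hv : v ≠ t) (a : ZMod n) :
    colC n p G t i j h f (iota n p v a) =
      (bif h (QuotientGroup.mk (Units.mk0 (v - t) (sub_ne_zero_of_ne hv))) then i else j) := by
  have hx : psi n p (iota n p v a) = v := psi_iota _ _
  have hne : ¬ psi n p (iota n p v a) = t := by rw [hx]; exact hv
  rw [colC_out hne]
  have he : Units.mk0 (psi n p (iota n p v a) - t) (sub_ne_zero_of_ne hne)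
      = Units.mk0 (v - t) (sub_ne_zero_of_ne hv) := mk0_congr (by rw [hx]) _ _
  rw [he]

lemma quot_rep {G : Subgroup (ZMod p)ˣ} (q : (ZMod p)ˣ ⧸ G) :
    ∃ (v : ZMod p) (hv : v ≠ 0),
      (QuotientGroup.mk (Units.mk0 v hv) : (ZMod p)ˣ ⧸ G) = q := by
  refine ⟨((Quotient.out q : (ZMod p)ˣ) : ZMod p), Units.ne_zero _, ?_⟩
  have : Units.mk0 ((Quotient.out q : (ZMod p)ˣ) : ZMod p) (Units.ne_zero _)
      = Quotient.out q := Units.ext rfl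
  rw [this]
  exact Quotient.out_eq q

lemma noncst_wit {α : Type*} {h : α → Bool} (hn : Noncst h) :
    ∃ x y, h x = true ∧ h y = false := by
  unfold Noncst at hn
  push_neg at hn
  obtain ⟨x, hx⟩ := hn true
  obtain ⟨y, hy⟩ := hn false
  exact ⟨y, x, by simpa using hy, by simpa using hx⟩

lemma third_elt (hp3 : 3 ≤ p) (t1 t2 : ZMod p) : ∃ w : ZMod p, w ≠ t1 ∧ w ≠ t2 := by
  have h1 : (1 : ZMod p) ≠ 0 := one_ne_zero
  have h2 : (2 : ZMod p) ≠ 0 := two_ne_zero'' hp3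
  have h21 : (2 : ZMod p) ≠ 1 := by
    intro h
    exact h1 (by linear_combination h)
  by_cases hc : t2 = t1 + 1
  · refine ⟨t1 + 2, fun h => h2 (by linear_combination h), ?_⟩
    rw [hc]
    intro h
    exact h21 (by linear_combination h)
  · exact ⟨t1 + 1, fun h => h1 (by linear_combination h), fun h => hc h.symm⟩

lemma add_ne_self (t : ZMod p) : t + 1 ≠ t := by
  intro h
  exact (one_ne_zero : (1 : ZMod p) ≠ 0) (by linear_combination h)

def Uses3 {m r : ℕ} (c : ZMod m → Fin r) : Prop :=
  ∃ x y z, c x ≠ c y ∧ c y ≠ c z ∧ c x ≠ c z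

lemma le2_no3 {m : ℕ} {c : ZMod m → Fin r} (i j : Fin r) (hc : ∀ x, c x = i ∨ c x = j) :
    ¬ Uses3 c := by
  rintro ⟨x, y, z, h1, h2, h3⟩
  exact (mem2 (hc x) (hc y) (hc z)).elim h1 (fun h => h.elim h2 h3)

lemma colB_uses3 {t : ZMod p} {i : Fin r} {f : ZMod n → Fin r} (hf : ¬ QQ i f) :
    Uses3 (colB n p t i f) := by
  have ha : ∃ a, f a ≠ i := by
    by_contra h
    push_neg at h
    exact hf ⟨i, fun a => Or.inl (h a)⟩
  obtain ⟨a0, ha0⟩ := ha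
  have hb : ∃ b, f b ≠ i ∧ f b ≠ f a0 := by
    by_contra h
    push_neg at h
    refine hf ⟨f a0, fun a => ?_⟩
    by_cases hfa : f a = i
    · exact Or.inl hfa
    · exact Or.inr (h a hfa)
  obtain ⟨b0, hb1, hb2⟩ := hb
  refine ⟨iota n p (t + 1) 0, iota n p t a0, iota n p t b0, ?_, ?_, ?_⟩
  · rw [colB_out (by rw [psi_iota]; exact add_ne_self t), colB_iota]
    exact fun h => ha0 h.symm
  · rw [colB_iota, colB_iota]
    exact fun h => hb2 h.symm
  · rw [colB_out (by rw [psi_iota]; exact add_ne_self t), colB_iota]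
    exact fun h => hb1 h.symm

lemma colC_coset_color {G : Subgroup (ZMod p)ˣ} {t : ZMod p} {i j : Fin r}
    {h : (ZMod p)ˣ ⧸ G → Bool} {f : ZMod n → Fin r} {q : (ZMod p)ˣ ⧸ G}
    {v : ZMod p} {hv : v ≠ 0} (hq : (QuotientGroup.mk (Units.mk0 v hv) : (ZMod p)ˣ ⧸ G) = q)
    (a : ZMod n) :
    colC n p G t i j h f (iota n p (t + v) a) = (bif h q then i else j) := by
  have hne : t + v ≠ t := by
    intro hh
    exact hv (by linear_combination hh)
  rw [colC_iota_out hne]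
  have he : t + v - t = v := by ring
  rw [mk0_congr he _ hv, hq]

lemma colC_uses3 {G : Subgroup (ZMod p)ˣ} {t : ZMod p} {i j : Fin r}
    {h : (ZMod p)ˣ ⧸ G → Bool} {f : ZMod n → Fin r}
    (hij : i ≠ j) (hh : Noncst h) (hf : ¬ InPr i j f) :
    Uses3 (colC n p G t i j h f) := by
  obtain ⟨q1, q2, hq1, hq2⟩ := noncst_wit hh
  obtain ⟨v1, hv1, hm1⟩ := quot_rep q1
  obtain ⟨v2, hv2, hm2⟩ := quot_rep q2
  have ha : ∃ a, ¬ (f a = i ∨ f a = j) := by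
    by_contra hcon
    push_neg at hcon
    exact hf fun a => by
      rcases Decidable.em (f a = i) with h' | h'
      · exact Or.inl h'
      · exact Or.inr ((hcon a).resolve_left h')
  obtain ⟨a0, ha0⟩ := ha
  push_neg at ha0
  refine ⟨iota n p t a0, iota n p (t + v1) 0, iota n p (t + v2) 0, ?_, ?_, ?_⟩
  · rw [colC_iota, colC_coset_color hm1, hq1]
    exact ha0.1
  · rw [colC_coset_color hm1, colC_coset_color hm2, hq1, hq2]
    exact hij
  · rw [colC_iota, colC_coset_color hm2, hq2]
    exact ha0.2

lemma pair_eq {i j i' j' : Fin r} (hij : i < j) (hij' : i' < j')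
    (h1 : i = i' ∨ i = j') (h2 : j = i' ∨ j = j') : i = i' ∧ j = j' := by
  rcases h1 with rfl | rfl
  · rcases h2 with rfl | h2
    · exact absurd hij (lt_irrefl _)
    · exact ⟨rfl, h2⟩
  · rcases h2 with rfl | h2
    · exact absurd (hij.trans hij') (lt_irrefl _)
    · rw [← h2] at hij
      exact absurd hij (lt_irrefl _)

lemma colB_inj (hp3 : 3 ≤ p) {t t' : ZMod p} {i i' : Fin r} {f f' : ZMod n → Fin r}
    (hf' : ¬ QQ i' f')
    (heq : colB n p t i f = colB n p t' i' f') : t = t' ∧ i = i' ∧ f = f' := by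
  by_cases htt : t = t'
  · subst htt
    constructor
    · rfl
    constructor
    · have hout := congrFun heq (iota n p (t + 1) 0)
      rw [colB_out (by rw [psi_iota]; exact add_ne_self t),
        colB_out (by rw [psi_iota]; exact add_ne_self t)] at hout
      exact hout
    · funext a
      have := congrFun heq (iota n p t a)
      rw [colB_iota, colB_iota] at this
      exact this
  · exfalso
    apply hf'
    refine ⟨i, fun a => Or.inr ?_⟩
    have := congrFun heq (iota n p t' a)
    rw [colB_iota] at this
    rw [colB_out (by rw [psi_iota]; exact fun hc => htt hc.symm)] at this
    exact this.symm

lemma colB_ne_colC (hp3 : 3 ≤ p) {G : Subgroup (ZMod p)ˣ} {t t' : ZMod p}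
    {i i' j' : Fin r} {f f' : ZMod n → Fin r} {h' : (ZMod p)ˣ ⧸ G → Bool}
    (hij' : i' ≠ j') (hh' : Noncst h') (hf' : ¬ InPr i' j' f') :
    colB n p t i f ≠ colC n p G t' i' j' h' f' := by
  intro heq
  obtain ⟨q1, q2, hq1, hq2⟩ := noncst_wit hh'
  obtain ⟨v1, hv1, hm1⟩ := quot_rep q1
  obtain ⟨v2, hv2, hm2⟩ := quot_rep q2
  by_cases htt : t = t'
  · subst htt
    have e1 := congrFun heq (iota n p (t + v1) 0)
    have e2 := congrFun heq (iota n p (t + v2) 0)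
    rw [colC_coset_color hm1, hq1] at e1
    rw [colC_coset_color hm2, hq2] at e2
    simp only [Bool.cond_true, Bool.cond_false] at e1 e2
    have hne1 : t + v1 ≠ t := fun hh => hv1 (by linear_combination hh)
    have hne2 : t + v2 ≠ t := fun hh => hv2 (by linear_combination hh)
    rw [colB_out (by rw [psi_iota]; exact hne1)] at e1
    rw [colB_out (by rw [psi_iota]; exact hne2)] at e2
    exact hij' (e1.symm.trans e2)
  · -- f' is constant i, so i ∉ {i', j'}
    have hconst : ∀ a, f' a = i := by
      intro a
      have := congrFun heq (iota n p t' a)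
      rw [colC_iota] at this
      rw [colB_out (by rw [psi_iota]; exact fun hc => htt hc.symm)] at this
      exact this.symm
    have hnotin : ¬ (i = i' ∨ i = j') := by
      intro hin
      apply hf'
      intro a
      rw [hconst a]
      exact hin
    obtain ⟨w, hw1, hw2⟩ := third_elt hp3 t t'
    have := congrFun heq (iota n p w 0)
    rw [colB_out (by rw [psi_iota]; exact hw1)] at this
    have hmem : colC n p G t' i' j' h' f' (iota n p w 0) = i' ∨
        colC n p G t' i' j' h' f' (iota n p w 0) = j' :=
      colC_out_mem (by rw [psi_iota]; exact hw2)
    rw [← this] at hmem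
    exact hnotin hmem

lemma colC_inj (hp3 : 3 ≤ p) {G : Subgroup (ZMod p)ˣ}
    (hu2 : Units.mk0 (2 : ZMod p) (two_ne_zero'' hp3) ∈ G)
    {t t' : ZMod p} {i j i' j' : Fin r} {f f' : ZMod n → Fin r}
    {h h' : (ZMod p)ˣ ⧸ G → Bool}
    (hij : i < j) (hij' : i' < j') (hh : Noncst h) (hh' : Noncst h')
    (hf : ¬ InPr i j f) (hf' : ¬ InPr i' j' f')
    (heq : colC n p G t i j h f = colC n p G t' i' j' h' f') :
    t = t' ∧ i = i' ∧ j = j' ∧ h = h' ∧ f = f' := by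
  by_cases htt : t = t'
  · subst htt
    have hff : f = f' := by
      funext a
      have := congrFun heq (iota n p t a)
      rw [colC_iota, colC_iota] at this
      exact this
    obtain ⟨q1, q2, hq1, hq2⟩ := noncst_wit hh
    obtain ⟨v1, hv1, hm1⟩ := quot_rep q1
    obtain ⟨v2, hv2, hm2⟩ := quot_rep q2
    have hne1 : t + v1 ≠ t := fun hhc => hv1 (by linear_combination hhc)
    have hne2 : t + v2 ≠ t := fun hhc => hv2 (by linear_combination hhc)
    have e1 := congrFun heq (iota n p (t + v1) 0)
    have e2 := congrFun heq (iota n p (t + v2) 0)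
    rw [colC_coset_color hm1, hq1] at e1
    rw [colC_coset_color hm2, hq2] at e2
    simp only [Bool.cond_true, Bool.cond_false] at e1 e2
    have m1 : i = i' ∨ i = j' := by
      rw [e1]
      exact colC_out_mem (by rw [psi_iota]; exact hne1)
    have m2 : j = i' ∨ j = j' := by
      rw [e2]
      exact colC_out_mem (by rw [psi_iota]; exact hne2)
    obtain ⟨hii, hjj⟩ := pair_eq hij hij' m1 m2
    subst hii
    subst hjj
    refine ⟨rfl, rfl, rfl, ?_, hff⟩
    funext q
    obtain ⟨v, hv, hm⟩ := quot_rep q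
    have hne : t + v ≠ t := fun hhc => hv (by linear_combination hhc)
    have e := congrFun heq (iota n p (t + v) 0)
    rw [colC_coset_color hm, colC_coset_color hm] at e
    cases hcq : h q <;> cases hcq' : h' q <;> rw [hcq, hcq'] at e <;> simp at e
    · exact absurd e.symm (ne_of_lt hij)
    · exact absurd e (ne_of_lt hij)
  · exfalso
    -- f' is constant with value = color of coset t' under first coloring
    have htt' : t' ≠ t := fun hc => htt hc.symm
    set b' := (bif h (QuotientGroup.mk (Units.mk0 (t' - t) (sub_ne_zero_of_ne htt')))
      then i else j) with hb'
    have hconst : ∀ a, f' a = b' := by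
      intro a
      have := congrFun heq (iota n p t' a)
      rw [colC_iota, colC_iota_out htt'] at this
      exact this.symm
    have hnotin : ¬ (b' = i' ∨ b' = j') := by
      intro hin
      apply hf'
      intro a
      rw [hconst a]
      exact hin
    -- the coset w = t + 2(t'-t)
    have h2 : (2 : ZMod p) ≠ 0 := two_ne_zero'' hp3
    have hsub : t' - t ≠ 0 := sub_ne_zero_of_ne htt'
    have hw1 : t + 2 * (t' - t) ≠ t := by
      intro hc
      exact mul_ne_zero h2 hsub (by linear_combination hc)
    have hw2 : t + 2 * (t' - t) ≠ t' := by
      intro hc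
      exact hsub (by linear_combination hc)
    have e := congrFun heq (iota n p (t + 2 * (t' - t)) 0)
    -- left side equals b'
    have hcls : (QuotientGroup.mk (Units.mk0 (t + 2 * (t' - t) - t)
        (sub_ne_zero_of_ne hw1)) : (ZMod p)ˣ ⧸ G) =
        QuotientGroup.mk (Units.mk0 (t' - t) (sub_ne_zero_of_ne htt')) := by
      rw [mk0_congr (show t + 2 * (t' - t) - t = 2 * (t' - t) by ring) _
        (mul_ne_zero h2 hsub)]
      exact cls_two hp3 hu2 _ _
    rw [colC_iota_out hw1, hcls] at e
    have hmem : colC n p G t' i' j' h' f' (iota n p (t + 2 * (t' - t)) 0) = i' ∨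
        colC n p G t' i' j' h' f' (iota n p (t + 2 * (t' - t)) 0) = j' :=
      colC_out_mem (by rw [psi_iota]; exact hw2)
    rw [← e] at hmem
    exact hnotin hmem

lemma colA_mem {m : ℕ} (i j : Fin r) (g : ZMod m → Bool) (x : ZMod m) :
    colA i j g x = i ∨ colA i j g x = j := by
  cases hg : g x <;> simp [colA, hg]

lemma colA_inj {m : ℕ} [NeZero m] {i j i' j' : Fin r} {g g' : ZMod m → Bool}
    (hij : i < j) (hij' : i' < j') (hg : Noncst g)
    (heq : colA i j g = colA i' j' g') : i = i' ∧ j = j' ∧ g = g' := by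
  obtain ⟨x1, x0, hx1, hx0⟩ := noncst_wit hg
  have e1 := congrFun heq x1
  have e0 := congrFun heq x0
  rw [show colA i j g x1 = j by simp [colA, hx1]] at e1
  rw [show colA i j g x0 = i by simp [colA, hx0]] at e0
  have m1 : i = i' ∨ i = j' := by rw [e0]; exact colA_mem i' j' g' x0
  have m2 : j = i' ∨ j = j' := by rw [e1]; exact colA_mem i' j' g' x1
  obtain ⟨hii, hjj⟩ := pair_eq hij hij' m1 m2
  subst hii
  subst hjj
  refine ⟨rfl, rfl, ?_⟩
  funext x
  have e := congrFun heq x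
  cases hgx : g x <;> cases hgx' : g' x <;>
    simp only [colA, hgx, hgx', Bool.cond_true, Bool.cond_false] at e ⊢
  · exact absurd e (ne_of_lt hij)
  · exact absurd e.symm (ne_of_lt hij)

lemma const_ne_colA {m : ℕ} [NeZero m] {k i j : Fin r} {g : ZMod m → Bool}
    (hij : i < j) (hg : Noncst g) : (fun _ : ZMod m => k) ≠ colA i j g := by
  intro heq
  obtain ⟨x1, x0, hx1, hx0⟩ := noncst_wit hg
  have e1 := congrFun heq x1
  have e0 := congrFun heq x0
  rw [show colA i j g x1 = j by simp [colA, hx1]] at e1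
  rw [show colA i j g x0 = i by simp [colA, hx0]] at e0
  exact (ne_of_lt hij) (e0.symm.trans e1)

def PA (n p r : ℕ) : Type :=
  Fin r ⊕ ((Pairs r) × {g : ZMod (n * p) → Bool // Noncst g})

def PB (n p r : ℕ) : Type :=
  Σ ti : ZMod p × Fin r, {f : ZMod n → Fin r // RainbowAPFreeZ f ∧ ¬ QQ ti.2 f}

def PC (n p r : ℕ) (G : Subgroup (ZMod p)ˣ) : Type :=
  Σ tq : ZMod p × Pairs r, ({h : (ZMod p)ˣ ⧸ G → Bool // Noncst h} ×
    {f : ZMod n → Fin r // RainbowAPFreeZ f ∧ ¬ InPr tq.2.1.1 tq.2.1.2 f})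

def Phi (n p r : ℕ) [NeZero n] [NeZero p] [Fact p.Prime] (G : Subgroup (ZMod p)ˣ) :
    PA n p r ⊕ (PB n p r ⊕ PC n p r G) → (ZMod (n * p) → Fin r) :=
  Sum.elim
    (Sum.elim (fun k => fun _ => k) (fun qg => colA qg.1.1.1 qg.1.1.2 qg.2.1))
    (Sum.elim (fun tif => colB n p tif.1.1 tif.1.2 tif.2.1)
      (fun tqhf => colC n p G tqhf.1.1 tqhf.1.2.1.1 tqhf.1.2.1.2 tqhf.2.1.1 tqhf.2.2.1))

lemma phi_rf (hp3 : 3 ≤ p) {G : Subgroup (ZMod p)ˣ}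
    (hu2 : Units.mk0 (2 : ZMod p) (two_ne_zero'' hp3) ∈ G)
    (hneg : (-1 : (ZMod p)ˣ) ∈ G) :
    ∀ a, RainbowAPFreeZ (Phi n p r G a) := by
  rintro ((k | ⟨q, g⟩) | (⟨ti, f⟩ | ⟨tq, hh, f⟩))
  · exact rf_le2 k k fun x => Or.inl rfl
  · exact rfA _ _ _
  · exact rfB Fact.out hp3 f.2.1
  · exact rfC hp3 hu2 hneg f.2.1

lemma phi_inj (hp3 : 3 ≤ p) {G : Subgroup (ZMod p)ˣ}
    (hu2 : Units.mk0 (2 : ZMod p) (two_ne_zero'' hp3) ∈ G) :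
    Function.Injective (Phi n p r G) := by
  rintro ((k | ⟨⟨⟨i, j⟩, hij⟩, g⟩) | (⟨⟨t, i⟩, f⟩ | ⟨⟨t, ⟨⟨i, j⟩, hij⟩⟩, hh, f⟩))
      ((k' | ⟨⟨⟨i', j'⟩, hij'⟩, g'⟩) | (⟨⟨t', i'⟩, f'⟩ | ⟨⟨t', ⟨⟨i', j'⟩, hij'⟩⟩, hh', f'⟩)) hab <;>
    dsimp only [Phi, Sum.elim] at hab
  · rw [congrFun hab 0]
  · exact absurd hab (const_ne_colA hij' g'.2)
  · exfalso
    apply le2_no3 k k (fun _ => Or.inl rfl)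
    rw [hab]
    exact colB_uses3 f'.2.2
  · exfalso
    apply le2_no3 k k (fun _ => Or.inl rfl)
    rw [hab]
    exact colC_uses3 (ne_of_lt hij') hh'.2 f'.2.2
  · exact absurd hab.symm (const_ne_colA hij g.2)
  · obtain ⟨h1, h2, h3⟩ := colA_inj hij hij' g.2 hab
    subst h1
    subst h2
    rw [Subtype.ext h3]
  · exfalso
    apply le2_no3 i j (colA_mem i j g.1)
    rw [hab]
    exact colB_uses3 f'.2.2
  · exfalso
    apply le2_no3 i j (colA_mem i j g.1)
    rw [hab]
    exact colC_uses3 (ne_of_lt hij') hh'.2 f'.2.2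
  · exfalso
    apply le2_no3 k' k' (fun _ => Or.inl rfl)
    rw [← hab]
    exact colB_uses3 f.2.2
  · exfalso
    apply le2_no3 i' j' (colA_mem i' j' g'.1)
    rw [← hab]
    exact colB_uses3 f.2.2
  · obtain ⟨h1, h2, h3⟩ := colB_inj hp3 f'.2.2 hab
    subst h1
    subst h2
    rw [Subtype.ext h3]
  · exact absurd hab (colB_ne_colC hp3 (ne_of_lt hij') hh'.2 f'.2.2)
  · exfalso
    apply le2_no3 k' k' (fun _ => Or.inl rfl)
    rw [← hab]
    exact colC_uses3 (ne_of_lt hij) hh.2 f.2.2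
  · exfalso
    apply le2_no3 i' j' (colA_mem i' j' g'.1)
    rw [← hab]
    exact colC_uses3 (ne_of_lt hij) hh.2 f.2.2
  · exact absurd hab.symm (colB_ne_colC hp3 (ne_of_lt hij) hh.2 f.2.2)
  · obtain ⟨h1, h2, h3, h4, h5⟩ := colC_inj hp3 hu2 hij hij' hh.2 hh'.2 f.2.2 f'.2.2 hab
    subst h1
    subst h2
    subst h3
    rw [Subtype.ext h4, Subtype.ext h5]

end families

section assembly
variable {n p r : ℕ} [NeZero n] [NeZero p] [Fact p.Prime]

lemma card_PA_eq : Nat.card (PA n p r) = r + Nat.card (Pairs r) * (2 ^ (n * p) - 2) := by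
  unfold PA
  rw [Nat.card_sum, Nat.card_prod]
  congr 1
  · rw [Nat.card_eq_fintype_card, Fintype.card_fin]
  · congr 1
    rw [card_noncst, Nat.card_zmod]

lemma card_fiber_B_ge (hr : 3 ≤ r) (i : Fin r) :
    (gZ r n : ℤ) - ((r : ℤ) - 1) * 2 ^ n + r - 2 ≤
      (Nat.card {f : ZMod n → Fin r // RainbowAPFreeZ f ∧ ¬ QQ i f} : ℤ) := by
  have hs := gZ_split (n := n) (r := r) (QQ i)
  have h1 : Nat.card {f : ZMod n → Fin r // RainbowAPFreeZ f ∧ QQ i f} ≤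
      1 + (r - 1) * (2 ^ n - 1) := by
    refine le_trans ?_ (card_QQ_le hr i)
    apply Nat.card_le_card_of_injective
      (f := fun f => (⟨f.1, f.2.2⟩ : {f : ZMod n → Fin r // QQ i f}))
    intro a b h
    have := congrArg Subtype.val h
    exact Subtype.ext this
  have h2n : (1 : ℕ) ≤ 2 ^ n := Nat.one_le_two_pow
  have hr1 : (1 : ℕ) ≤ r := by omega
  have hcast : ((1 + (r - 1) * (2 ^ n - 1) : ℕ) : ℤ) = 1 + ((r : ℤ) - 1) * (2 ^ n - 1) := by
    push_cast [Nat.cast_sub hr1, Nat.cast_sub h2n]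
    ring
  have h1' : (Nat.card {f : ZMod n → Fin r // RainbowAPFreeZ f ∧ QQ i f} : ℤ) ≤
      1 + ((r : ℤ) - 1) * (2 ^ n - 1) := by
    rw [← hcast]
    exact_mod_cast h1
  have hs' : (Nat.card {f : ZMod n → Fin r // RainbowAPFreeZ f ∧ QQ i f} : ℤ) +
      (Nat.card {f : ZMod n → Fin r // RainbowAPFreeZ f ∧ ¬ QQ i f} : ℤ) = (gZ r n : ℤ) := by
    exact_mod_cast congrArg (Nat.cast : ℕ → ℤ) hs
  have hring : (1 : ℤ) + ((r : ℤ) - 1) * (2 ^ n - 1) = ((r : ℤ) - 1) * 2 ^ n - r + 2 := by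
    ring
  linarith

lemma card_PB_ge (hr : 3 ≤ r) :
    (p : ℤ) * r * ((gZ r n : ℤ) - ((r : ℤ) - 1) * 2 ^ n + r - 2) ≤
      (Nat.card (PB n p r) : ℤ) := by
  classical
  unfold PB
  rw [Nat.card_eq_fintype_card, Fintype.card_sigma]
  have hb : ∀ ti : ZMod p × Fin r,
      (gZ r n : ℤ) - ((r : ℤ) - 1) * 2 ^ n + r - 2 ≤
        (Fintype.card {f : ZMod n → Fin r // RainbowAPFreeZ f ∧ ¬ QQ ti.2 f} : ℤ) := by
    intro ti
    rw [← Nat.card_eq_fintype_card]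
    exact card_fiber_B_ge hr ti.2
  have key := Finset.card_nsmul_le_sum Finset.univ
    (fun ti : ZMod p × Fin r =>
      (Fintype.card {f : ZMod n → Fin r // RainbowAPFreeZ f ∧ ¬ QQ ti.2 f} : ℤ))
    ((gZ r n : ℤ) - ((r : ℤ) - 1) * 2 ^ n + r - 2) (fun ti _ => hb ti)
  rw [Finset.card_univ, nsmul_eq_mul] at key
  have hcard : (Fintype.card (ZMod p × Fin r) : ℤ) = (p : ℤ) * r := by
    rw [Fintype.card_prod, ZMod.card, Fintype.card_fin]
    push_cast
    ring
  rw [hcard] at key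
  have hsum : ((∑ ti : ZMod p × Fin r,
      Fintype.card {f : ZMod n → Fin r // RainbowAPFreeZ f ∧ ¬ QQ ti.2 f} : ℕ) : ℤ) =
      ∑ ti : ZMod p × Fin r,
        (Fintype.card {f : ZMod n → Fin r // RainbowAPFreeZ f ∧ ¬ QQ ti.2 f} : ℤ) := by
    push_cast
    rfl
  rw [hsum]
  exact key

lemma card_fiber_C_ge (hr : 3 ≤ r) {i j : Fin r} (hij : i ≠ j) :
    (gZ r n : ℤ) - 2 ^ n ≤
      (Nat.card {f : ZMod n → Fin r // RainbowAPFreeZ f ∧ ¬ InPr i j f} : ℤ) := by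
  have hs := gZ_split (n := n) (r := r) (InPr i j)
  have h1 : Nat.card {f : ZMod n → Fin r // RainbowAPFreeZ f ∧ InPr i j f} ≤ 2 ^ n := by
    refine le_trans ?_ (card_InPr_le i j hij)
    apply Nat.card_le_card_of_injective
      (f := fun f => (⟨f.1, f.2.2⟩ : {f : ZMod n → Fin r // InPr i j f}))
    intro a b h
    have := congrArg Subtype.val h
    exact Subtype.ext this
  have hs' : (Nat.card {f : ZMod n → Fin r // RainbowAPFreeZ f ∧ InPr i j f} : ℤ) +
      (Nat.card {f : ZMod n → Fin r // RainbowAPFreeZ f ∧ ¬ InPr i j f} : ℤ) =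
      (gZ r n : ℤ) := by
    exact_mod_cast congrArg (Nat.cast : ℕ → ℤ) hs
  have h1' : (Nat.card {f : ZMod n → Fin r // RainbowAPFreeZ f ∧ InPr i j f} : ℤ) ≤
      (2 : ℤ) ^ n := by exact_mod_cast h1
  linarith

lemma card_PC_ge (hr : 3 ≤ r) {G : Subgroup (ZMod p)ˣ} {E : ℕ}
    (hE : E ≤ Nat.card ((ZMod p)ˣ ⧸ G)) (hq1 : 0 < Nat.card ((ZMod p)ˣ ⧸ G)) :
    (r.choose 2 : ℤ) * p * ((2 : ℤ) ^ E - 2) * ((gZ r n : ℤ) - 2 ^ n) ≤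
      (Nat.card (PC n p r G) : ℤ) := by
  classical
  set q := Nat.card ((ZMod p)ˣ ⧸ G) with hqdef
  have h2q : (2 : ℕ) ≤ 2 ^ q := by
    calc (2 : ℕ) = 2 ^ 1 := rfl
    _ ≤ 2 ^ q := Nat.pow_le_pow_right (by norm_num) hq1
  have hF0 : (0 : ℤ) ≤ (gZ r n : ℤ) - 2 ^ n := by
    have := gZ_lower (n := n) (r := r) hr
    have : ((2 ^ n : ℕ) : ℤ) ≤ (gZ r n : ℤ) := by exact_mod_cast this
    push_cast at this
    linarith
  have ha0 : (2 : ℤ) ^ E - 2 ≤ (2 : ℤ) ^ q - 2 := by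
    have : (2 : ℤ) ^ E ≤ 2 ^ q := pow_le_pow_right₀ (by norm_num) hE
    linarith
  have ha1 : (0 : ℤ) ≤ (2 : ℤ) ^ q - 2 := by
    have : (2 : ℤ) ^ 1 ≤ 2 ^ q := pow_le_pow_right₀ (by norm_num) hq1
    simp at this
    linarith
  set C0 : ℤ := ((2 : ℤ) ^ E - 2) * ((gZ r n : ℤ) - 2 ^ n) with hC0def
  set C0' : ℤ := max C0 0 with hC0'def
  have hfib : ∀ tq : ZMod p × Pairs r,
      C0' ≤ ((Fintype.card ({h : (ZMod p)ˣ ⧸ G → Bool // Noncst h} ×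
        {f : ZMod n → Fin r // RainbowAPFreeZ f ∧ ¬ InPr tq.2.1.1 tq.2.1.2 f}) : ℕ) : ℤ) := by
    intro tq
    rw [Fintype.card_prod]
    have hH : Fintype.card {h : (ZMod p)ˣ ⧸ G → Bool // Noncst h} = 2 ^ q - 2 := by
      rw [← Nat.card_eq_fintype_card, card_noncst]
    have hHZ : ((Fintype.card {h : (ZMod p)ˣ ⧸ G → Bool // Noncst h} : ℕ) : ℤ) =
        (2 : ℤ) ^ q - 2 := by
      rw [hH, Nat.cast_sub h2q]
      push_cast
      ring
    have hFZ : (gZ r n : ℤ) - 2 ^ n ≤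
        ((Fintype.card {f : ZMod n → Fin r //
          RainbowAPFreeZ f ∧ ¬ InPr tq.2.1.1 tq.2.1.2 f} : ℕ) : ℤ) := by
      rw [← Nat.card_eq_fintype_card]
      exact card_fiber_C_ge hr (ne_of_lt tq.2.2)
    push_cast
    rw [hHZ]
    apply max_le
    · calc C0 = ((2 : ℤ) ^ E - 2) * ((gZ r n : ℤ) - 2 ^ n) := rfl
      _ ≤ ((2 : ℤ) ^ q - 2) * ((gZ r n : ℤ) - 2 ^ n) :=
          mul_le_mul_of_nonneg_right ha0 hF0
      _ ≤ _ := mul_le_mul_of_nonneg_left hFZ ha1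
    · positivity
  unfold PC
  rw [Nat.card_eq_fintype_card, Fintype.card_sigma]
  have key := Finset.card_nsmul_le_sum Finset.univ
    (fun tq : ZMod p × Pairs r =>
      ((Fintype.card ({h : (ZMod p)ˣ ⧸ G → Bool // Noncst h} ×
        {f : ZMod n → Fin r // RainbowAPFreeZ f ∧ ¬ InPr tq.2.1.1 tq.2.1.2 f}) : ℕ) : ℤ))
    C0' (fun tq _ => hfib tq)
  rw [Finset.card_univ, nsmul_eq_mul] at key
  have hcardP : (Fintype.card (ZMod p × Pairs r) : ℤ) =
      (p : ℤ) * (Nat.card (Pairs r) : ℤ) := by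
    rw [Fintype.card_prod, ZMod.card, ← Nat.card_eq_fintype_card (α := Pairs r)]
    push_cast
    ring
  rw [hcardP] at key
  have hsum : ((∑ tq : ZMod p × Pairs r,
      Fintype.card ({h : (ZMod p)ˣ ⧸ G → Bool // Noncst h} ×
        {f : ZMod n → Fin r // RainbowAPFreeZ f ∧ ¬ InPr tq.2.1.1 tq.2.1.2 f}) : ℕ) : ℤ) =
      ∑ tq : ZMod p × Pairs r,
        ((Fintype.card ({h : (ZMod p)ˣ ⧸ G → Bool // Noncst h} ×
          {f : ZMod n → Fin r // RainbowAPFreeZ f ∧ ¬ InPr tq.2.1.1 tq.2.1.2 f}) : ℕ) : ℤ) := by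
    push_cast
    rfl
  rw [hsum]
  have hch : (r.choose 2 : ℤ) ≤ (Nat.card (Pairs r) : ℤ) := by
    exact_mod_cast card_pairs_ge r
  have hp0 : (0 : ℤ) ≤ (p : ℤ) := by positivity
  have hch0 : (0 : ℤ) ≤ (r.choose 2 : ℤ) := by positivity
  have hC0le : C0 ≤ C0' := le_max_left _ _
  have hC0pos : (0 : ℤ) ≤ C0' := le_max_right _ _
  have s1 : (r.choose 2 : ℤ) * p * C0 ≤ (r.choose 2 : ℤ) * p * C0' :=
    mul_le_mul_of_nonneg_left hC0le (by positivity)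
  have s2 : (r.choose 2 : ℤ) * p * C0' ≤ (p : ℤ) * (Nat.card (Pairs r) : ℤ) * C0' := by
    apply mul_le_mul_of_nonneg_right _ hC0pos
    nlinarith
  calc (r.choose 2 : ℤ) * p * ((2 : ℤ) ^ E - 2) * ((gZ r n : ℤ) - 2 ^ n)
      = (r.choose 2 : ℤ) * p * C0 := by rw [hC0def]; ring
  _ ≤ (r.choose 2 : ℤ) * p * C0' := s1
  _ ≤ (p : ℤ) * (Nat.card (Pairs r) : ℤ) * C0' := s2
  _ ≤ _ := key

end assembly

section inst
variable {n p r : ℕ} [NeZero n] [NeZero p] [Fact p.Prime]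

instance : Finite (PA n p r) := by unfold PA; infer_instance
instance : Finite (PB n p r) := by unfold PB; infer_instance
instance (G : Subgroup (ZMod p)ˣ) : Finite (PC n p r G) := by unfold PC; infer_instance

end inst

end S14

theorem stmt_14 (n r p : ℕ) (hn : 1 ≤ n) (hr : 3 ≤ r) (hp : p.Prime) (hp3 : 3 ≤ p) :
    (r.choose 2 : ℤ) * 2 ^ (n * p) - r ^ 2 + 2 * r +
        p * r * ((gZ r n : ℤ) - (r - 1) * 2 ^ n + r - 2) +
        (r.choose 2 : ℤ) * p *
          (2 ^ ((p - 1) / ((if Even (orderOf (2 : ZMod p)) then 1 else 2) *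
            orderOf (2 : ZMod p))) - 2) * ((gZ r n : ℤ) - 2 ^ n)
      ≤ (gZ r (n * p) : ℤ) := by
  haveI : NeZero n := ⟨by omega⟩
  haveI : NeZero p := ⟨by omega⟩
  haveI : Fact p.Prime := ⟨hp⟩
  classical
  set G := S14.Gd p hp3 with hG
  have hu2 : Units.mk0 (2 : ZMod p) (S14.two_ne_zero'' hp3) ∈ G := S14.u2_mem_Gd hp3
  have hneg : (-1 : (ZMod p)ˣ) ∈ G := S14.neg_one_mem_Gd hp3
  have hinj : Function.Injective (fun a => (⟨S14.Phi n p r G a, S14.phi_rf hp3 hu2 hneg a⟩ :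
      {c : ZMod (n * p) → Fin r // RainbowAPFreeZ c})) := by
    intro a b hab
    apply S14.phi_inj hp3 hu2
    have := congrArg Subtype.val hab
    exact this
  have hcard : Nat.card (S14.PA n p r ⊕ (S14.PB n p r ⊕ S14.PC n p r G)) ≤
      Nat.card {c : ZMod (n * p) → Fin r // RainbowAPFreeZ c} :=
    Nat.card_le_card_of_injective _ hinj
  rw [Nat.card_sum, Nat.card_sum] at hcard
  have hgz : Nat.card {c : ZMod (n * p) → Fin r // RainbowAPFreeZ c} = gZ r (n * p) := rfl
  rw [hgz] at hcard
  have hcardZ : (Nat.card (S14.PA n p r) : ℤ) + Nat.card (S14.PB n p r) +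
      Nat.card (S14.PC n p r G) ≤ (gZ r (n * p) : ℤ) := by
    have := hcard
    push_cast at this ⊢
    linarith
  have hm2 : (2 : ℕ) ≤ 2 ^ (n * p) := by
    have h1 : 1 ≤ n * p := Nat.mul_pos (by omega) (by omega)
    calc (2 : ℕ) = 2 ^ 1 := rfl
    _ ≤ 2 ^ (n * p) := Nat.pow_le_pow_right (by norm_num) h1
  have hA : (Nat.card (S14.PA n p r) : ℤ) =
      r + (Nat.card (S14.Pairs r) : ℤ) * ((2 : ℤ) ^ (n * p) - 2) := by
    rw [S14.card_PA_eq]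
    push_cast [Nat.cast_sub hm2]
    ring
  have hB := S14.card_PB_ge (n := n) (p := p) (r := r) hr
  have hE := S14.quot_card_ge (p := p) hp3
  have hq1 := S14.quot_card_pos (p := p) hp3
  have hC := S14.card_PC_ge (n := n) (p := p) (r := r) hr (G := G) hE hq1
  have hdvd : 2 ∣ r * (r - 1) := by
    have heven := Nat.even_mul_succ_self (r - 1)
    have hr1 : r - 1 + 1 = r := by omega
    rw [hr1] at heven
    rw [mul_comm]
    exact heven.two_dvd
  have hch2 : (r.choose 2) * 2 = r * (r - 1) := by
    rw [Nat.choose_two_right]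
    exact Nat.div_mul_cancel hdvd
  have hchZ : 2 * (r.choose 2 : ℤ) = (r : ℤ) * ((r : ℤ) - 1) := by
    have hcast := congrArg (Nat.cast : ℕ → ℤ) hch2
    push_cast [Nat.cast_sub (show 1 ≤ r by omega)] at hcast
    linarith
  have hNpr : (r.choose 2 : ℤ) ≤ (Nat.card (S14.Pairs r) : ℤ) := by
    exact_mod_cast S14.card_pairs_ge r
  have hApos : (0 : ℤ) ≤ (2 : ℤ) ^ (n * p) - 2 := by
    have hc : ((2 : ℕ) : ℤ) ≤ ((2 ^ (n * p) : ℕ) : ℤ) := by exact_mod_cast hm2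
    push_cast at hc
    linarith
  have hAa : (r.choose 2 : ℤ) * 2 ^ (n * p) - (r : ℤ) ^ 2 + 2 * r ≤
      (Nat.card (S14.PA n p r) : ℤ) := by
    rw [hA]
    nlinarith [mul_le_mul_of_nonneg_right hNpr hApos, hchZ]
  linarith [hAa, hB, hC, hcardZ]
end

section
/- For every integer r ≥ 3 there exists n₀ ∈ ℕ such that for all n ≥ n₀ the following holds. Let δ = 1/(34·log₂ n), let ξ be a real number with 0 < ξ < (log₂ r − 1)·n^{−1/3}·log₂ n + δ, and let A ⊆ [n] with |A| = (1 − ξ)n. Let I₀ ⊆ A with 1 ≤ |I₀| ≤ 2δn, and let x ∈ I₀. Then the number of ordered pairs (a, b) ∈ (A \ I₀)² with a < b such that {a, b, x} forms a 3-AP in [n] is at least n/5. -/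
/-!
Let `C = [n] \ (A \ I₀)`. Then `|C| ≤ (ξ + 2δ) n`, and the upper bound on `ξ + 2δ` tends to `0`,
so `|C| ≤ n / 20` for large `n`. The candidates `(x + d, x + 2d)` with `x + 2d ≤ n` and
`(x - 2d, x - d)` with `x - 2d ≥ 1` are about `n / 2` distinct pairs forming a 3-AP with `x`.
Within each of the two families an element of `C` occupies each position of at most one
candidate, so at most `4 |C|` candidates are lost and at least `n / 2 - 4 |C| - 3/2 ≥ n / 5`
of them lie in `(A \ I₀)²`.
-/

/-- The set `{a, b, x}` forms a 3-AP in `[n]`: some ordering of `a, b, x` is a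
triple `(u, u+d, u+2d)` with `d ≥ 1` and all three elements in `[n]`. -/
def FormsAP3 (n a b x : ℕ) : Prop :=
  ∃ u d : ℕ, 0 < d ∧ 1 ≤ u ∧ u + 2 * d ≤ n ∧
    ({a, b, x} : Set ℕ) = {u, u + d, u + 2 * d}

open Filter Topology Real Finset

theorem tendsto_rpow_neg_mul_logb_atTop (b : ℝ) {s : ℝ} (hs : 0 < s) :
    Tendsto (fun t : ℝ => t ^ (-s) * logb b t) atTop (𝓝 0) := by
  have h := (isLittleO_log_rpow_atTop hs).tendsto_div_nhds_zero.div_const (log b)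
  rw [zero_div] at h
  refine h.congr' ?_
  filter_upwards [eventually_gt_atTop 0] with t ht
  rw [rpow_neg ht.le, logb]
  ring

theorem card_le_card_filter_and_add_two_mul {α β : Type*} [DecidableEq α] [DecidableEq β]
    {S : Finset α} {U B : Finset β} {f g : α → β} (hf : Set.InjOn f S) (hg : Set.InjOn g S)
    (hfU : Set.MapsTo f S U) (hgU : Set.MapsTo g S U) :
    #S ≤ #{d ∈ S | f d ∈ B ∧ g d ∈ B} + 2 * #(U \ B) := by
  have card_filter_not_mem_le : ∀ h : α → β, Set.InjOn h S → Set.MapsTo h S U →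
      #{d ∈ S | h d ∉ B} ≤ #(U \ B) :=
    fun h hinj hmaps => card_le_card_of_injOn h
      (fun d hd => by
        simp only [coe_filter, Set.mem_ofPred_eq] at hd
        simpa [hd.2] using hmaps hd.1)
      (hinj.mono fun d hd => (mem_filter.1 hd).1)
  have neg_subset : {d ∈ S | ¬(f d ∈ B ∧ g d ∈ B)} ⊆ {d ∈ S | f d ∉ B} ∪ {d ∈ S | g d ∉ B} := by
    intro d
    simp only [mem_filter, mem_union]
    tauto
  calc #S = #{d ∈ S | f d ∈ B ∧ g d ∈ B} + #{d ∈ S | ¬(f d ∈ B ∧ g d ∈ B)} :=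
        (card_filter_add_card_filter_not _).symm
    _ ≤ #{d ∈ S | f d ∈ B ∧ g d ∈ B} + (#{d ∈ S | f d ∉ B} + #{d ∈ S | g d ∉ B}) := by
        gcongr
        exact (card_le_card neg_subset).trans (card_union_le _ _)
    _ ≤ #{d ∈ S | f d ∈ B ∧ g d ∈ B} + 2 * #(U \ B) := by
        have := card_filter_not_mem_le f hf hfU
        have := card_filter_not_mem_le g hg hgU
        omega

section

variable {n x d : ℕ}

theorem formsAP3_add (hx : 1 ≤ x) (hd : 0 < d) (h : x + 2 * d ≤ n) :
    FormsAP3 n (x + d) (x + 2 * d) x :=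
  ⟨x, d, hd, hx, h, by ext; simp only [Set.mem_insert_iff, Set.mem_singleton_iff]; tauto⟩

theorem formsAP3_sub (hd : 0 < d) (h : 2 * d < x) (hx : x ≤ n) :
    FormsAP3 n (x - 2 * d) (x - d) x := by
  refine ⟨x - 2 * d, d, hd, by omega, by omega, ?_⟩
  rw [show x - 2 * d + d = x - d by omega, show x - 2 * d + 2 * d = x by omega]

variable (B : Finset ℕ)

theorem card_filter_add_card_filter_le_natCard_AP3 (hx : x ∈ Icc 1 n) :
    #{d ∈ Icc 1 ((n - x) / 2) | x + d ∈ B ∧ x + 2 * d ∈ B} +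
      #{d ∈ Icc 1 ((x - 1) / 2) | x - 2 * d ∈ B ∧ x - d ∈ B} ≤
      Nat.card {p : ℕ × ℕ // p.1 ∈ B ∧ p.2 ∈ B ∧ p.1 < p.2 ∧ FormsAP3 n p.1 p.2 x} := by
  rw [mem_Icc] at hx
  set right := {d ∈ Icc 1 ((n - x) / 2) | x + d ∈ B ∧ x + 2 * d ∈ B}
  set left := {d ∈ Icc 1 ((x - 1) / 2) | x - 2 * d ∈ B ∧ x - d ∈ B}
  set S := {p : ℕ × ℕ | p.1 ∈ B ∧ p.2 ∈ B ∧ p.1 < p.2 ∧ FormsAP3 n p.1 p.2 x}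
  set T := right.image (fun d => (x + d, x + 2 * d)) ∪ left.image (fun d => (x - 2 * d, x - d))
  have hT_card : #T = #right + #left := by
    rw [card_union_of_disjoint, card_image_of_injective, card_image_of_injOn]
    · intro d₁ h₁ d₂ h₂ h
      simp only [left, coe_filter, mem_Icc, Set.mem_ofPred_eq, Prod.mk.injEq] at h₁ h₂ h
      omega
    · intro d₁ d₂ h
      simp only [Prod.mk.injEq] at h
      omega
    · simp only [disjoint_left, mem_image, right, left, mem_filter, mem_Icc]
      rintro _ ⟨d₁, hd₁, rfl⟩ ⟨d₂, hd₂, h⟩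
      simp only [Prod.mk.injEq] at h
      omega
  have hT_sub : (T : Set (ℕ × ℕ)) ⊆ S := by
    intro p hp
    simp only [T, right, left, coe_union, coe_image, coe_filter, mem_Icc, Set.mem_union,
      Set.mem_image, Set.mem_ofPred_eq] at hp
    rcases hp with ⟨d, ⟨hd, hB₁, hB₂⟩, rfl⟩ | ⟨d, ⟨hd, hB₁, hB₂⟩, rfl⟩
    · exact ⟨hB₁, hB₂, by omega, formsAP3_add hx.1 (by omega) (by omega)⟩
    · exact ⟨hB₁, hB₂, by omega, formsAP3_sub (by omega) (by omega) hx.2⟩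
  have hS_finite : S.Finite :=
    (B ×ˢ B).finite_toSet.subset fun p hp => by simpa using And.intro hp.1 hp.2.1
  calc #right + #left = #T := hT_card.symm
    _ = (T : Set (ℕ × ℕ)).ncard := (Set.ncard_coe_finset T).symm
    _ ≤ S.ncard := Set.ncard_le_ncard hT_sub hS_finite
    _ = _ := (Nat.card_coe_set_eq S).symm

theorem le_two_mul_natCard_AP3_add (hx : x ∈ Icc 1 n) :
    n ≤ 2 * Nat.card {p : ℕ × ℕ // p.1 ∈ B ∧ p.2 ∈ B ∧ p.1 < p.2 ∧ FormsAP3 n p.1 p.2 x} +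
      8 * #(Icc 1 n \ B) + 3 := by
  have h_pairs := card_filter_add_card_filter_le_natCard_AP3 B hx
  rw [mem_Icc] at hx
  have h_right := card_le_card_filter_and_add_two_mul (S := Icc 1 ((n - x) / 2)) (U := Icc 1 n)
    (B := B) (f := (x + ·)) (g := (x + 2 * ·))
    (fun _ _ _ _ h => by simpa using h) (fun _ _ _ _ h => by simp at h; omega)
    (fun d hd => by simp only [coe_Icc, Set.mem_Icc] at hd ⊢; omega)
    (fun d hd => by simp only [coe_Icc, Set.mem_Icc] at hd ⊢; omega)
  have h_left := card_le_card_filter_and_add_two_mul (S := Icc 1 ((x - 1) / 2)) (U := Icc 1 n)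
    (B := B) (f := (x - 2 * ·)) (g := (x - ·))
    (fun d₁ h₁ d₂ h₂ h => by simp only [coe_Icc, Set.mem_Icc] at h₁ h₂ h; omega)
    (fun d₁ h₁ d₂ h₂ h => by simp only [coe_Icc, Set.mem_Icc] at h₁ h₂ h; omega)
    (fun d hd => by simp only [coe_Icc, Set.mem_Icc] at hd ⊢; omega)
    (fun d hd => by simp only [coe_Icc, Set.mem_Icc] at hd ⊢; omega)
  simp only [Nat.card_Icc] at h_right h_left
  omega

end

theorem stmt_16_general (r : ℕ) :
    ∃ n₀ : ℕ, ∀ n : ℕ, n₀ ≤ n → ∀ δ ξ : ℝ, δ = 1 / (34 * Real.logb 2 n) →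
      0 < ξ → ξ < (Real.logb 2 r - 1) * (n : ℝ) ^ (-(1/3 : ℝ)) * Real.logb 2 n + δ →
      ∀ A : Finset ℕ, A ⊆ Finset.Icc 1 n → (A.card : ℝ) = (1 - ξ) * n →
      ∀ I₀ : Finset ℕ, I₀ ⊆ A → 1 ≤ I₀.card → (I₀.card : ℝ) ≤ 2 * δ * n →
      ∀ x ∈ I₀,
        (n : ℝ) / 5 ≤ (Nat.card {p : ℕ × ℕ //
          p.1 ∈ A \ I₀ ∧ p.2 ∈ A \ I₀ ∧ p.1 < p.2 ∧ FormsAP3 n p.1 p.2 x} : ℝ) := by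
  have h_lim : Tendsto (fun n : ℕ => (logb 2 r - 1) * (n : ℝ) ^ (-(1/3 : ℝ)) * logb 2 n +
      3 * (1 / (34 * logb 2 n))) atTop (𝓝 0) := by
    have h₁ := ((tendsto_rpow_neg_mul_logb_atTop 2 (by norm_num : (0 : ℝ) < 1 / 3)).comp
      tendsto_natCast_atTop_atTop).const_mul (logb 2 r - 1)
    have h₂ := (((tendsto_logb_atTop one_lt_two).comp tendsto_natCast_atTop_atTop).const_mul_atTop
      (by norm_num : (0 : ℝ) < 34)).inv_tendsto_atTop.const_mul 3
    simpa [mul_assoc] using h₁.add h₂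
  obtain ⟨n₀, hn₀⟩ := eventually_atTop.1 <|
    (h_lim.eventually (gt_mem_nhds (by norm_num : (0 : ℝ) < 1 / 20))).and
      (eventually_ge_atTop 15)
  refine ⟨n₀, fun n hn δ ξ hδ _ hξ A hA hA_card I₀ hI₀ _ hI₀_card x hx => ?_⟩
  obtain ⟨h_small, hn15⟩ := hn₀ n hn
  have h_missing : (#(Icc 1 n \ (A \ I₀)) : ℝ) ≤ n / 20 := by
    have hA_le : #A ≤ n := by simpa using card_le_card hA
    rw [card_sdiff_of_subset (sdiff_subset.trans hA), card_sdiff_of_subset hI₀, Nat.card_Icc,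
      Nat.add_sub_cancel, Nat.cast_sub (by omega), Nat.cast_sub (card_le_card hI₀), hA_card]
    rw [← hδ] at h_small
    have h_density : (ξ + 2 * δ) * n ≤ 1 / 20 * n :=
      mul_le_mul_of_nonneg_right (by linarith) n.cast_nonneg
    linarith
  have h_count : (n : ℝ) ≤ 2 * Nat.card {p : ℕ × ℕ //
      p.1 ∈ A \ I₀ ∧ p.2 ∈ A \ I₀ ∧ p.1 < p.2 ∧ FormsAP3 n p.1 p.2 x} +
      8 * #(Icc 1 n \ (A \ I₀)) + 3 := by
    exact_mod_cast le_two_mul_natCard_AP3_add (A \ I₀) (hA (hI₀ hx))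
  have : (15 : ℝ) ≤ n := by exact_mod_cast hn15
  linarith

theorem stmt_16 (r : ℕ) (hr : 3 ≤ r) :
    ∃ n₀ : ℕ, ∀ n : ℕ, n₀ ≤ n → ∀ δ ξ : ℝ, δ = 1 / (34 * Real.logb 2 n) →
      0 < ξ → ξ < (Real.logb 2 r - 1) * (n : ℝ) ^ (-(1/3 : ℝ)) * Real.logb 2 n + δ →
      ∀ A : Finset ℕ, A ⊆ Finset.Icc 1 n → (A.card : ℝ) = (1 - ξ) * n →
      ∀ I₀ : Finset ℕ, I₀ ⊆ A → 1 ≤ I₀.card → (I₀.card : ℝ) ≤ 2 * δ * n →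
      ∀ x ∈ I₀,
        (n : ℝ) / 5 ≤ (Nat.card {p : ℕ × ℕ //
          p.1 ∈ A \ I₀ ∧ p.2 ∈ A \ I₀ ∧ p.1 < p.2 ∧ FormsAP3 n p.1 p.2 x} : ℝ) :=
  stmt_16_general r
end
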